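/- arXiv:1401.7265 — 12 statements merged into one kernel-verified Lean document; each statement's English description precedes it below -/
import Mathlib

section
/- Let K and L be unital rings with L associative and commutative, and q : K → L a multiplicative quadratic map with associated biadditive form f(a,b)=q(a+b)−q(a)−q(b). Then for all a,b,c,d ∈ K one has f(a,b)·f(c,d) = f(ac,bd) + f(ad,bc). -/
/-- The polar (biadditive) form associated to a map `q`. -/
def polarMap {K L : Type*} [NonAssocRing K] [NonAssocRing L] (q : K → L) (a b : K) : L :=
  q (a + b) - q a - q b

theorem stmt_1 {K L : Type*} [NonAssocRing K] [CommRing L] (q : K → L)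
    (hmul : ∀ a b : K, q (a * b) = q a * q b)
    (hint : ∀ n : ℤ, q ((n : K)) = ((n ^ 2 : ℤ) : L))
    (hbil_left : ∀ a b c : K, polarMap q (a + b) c = polarMap q a c + polarMap q b c)
    (hbil_right : ∀ a b c : K, polarMap q a (b + c) = polarMap q a b + polarMap q a c) :
    ∀ a b c d : K,
      polarMap q a b * polarMap q c d
        = polarMap q (a * c) (b * d) + polarMap q (a * d) (b * c) := by
  have hcol : ∀ a b c : K, polarMap q (a * c) (b * c) = polarMap q a b * q c := by
    intro a b c
    unfold polarMap
    rw [← add_mul, hmul, hmul, hmul]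
    ring
  intro a b c d
  have h0 : q ((a + b) * (c + d)) = q (a + b) * q (c + d) := hmul _ _
  have h1 : (a + b) * (c + d) = (a * c + a * d) + (b * c + b * d) := by
    rw [add_mul, mul_add, mul_add]
  rw [h1] at h0
  have h2 : polarMap q (a * c + a * d) (b * c + b * d)
      = polarMap q (a * c) (b * c) + polarMap q (a * c) (b * d)
        + (polarMap q (a * d) (b * c) + polarMap q (a * d) (b * d)) := by
    rw [hbil_left, hbil_right, hbil_right]
  have h3 : q (a * c + a * d) = q a * q (c + d) := by rw [← mul_add, hmul]
  have h4 : q (b * c + b * d) = q b * q (c + d) := by rw [← mul_add, hmul]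
  have h5 := hcol a b c
  have h6 := hcol a b d
  unfold polarMap at *
  linear_combination -h0 + h2 + h3 + h4 + h5 + h6
end

section
/- Let q : K → L be a multiplicative quadratic map with associated biadditive form f, and let I be a right ideal of K. Then the set I^⊥ = {a ∈ K : f(a,b) = 0 for all b ∈ I} is a right ideal of K. Similarly, if I is a left ideal, I^⊥ is a left ideal. -/
theorem stmt_2 {K L : Type*} [Ring K] [CommRing L] (q : K → L)
    (hmul : ∀ a b : K, q (a * b) = q a * q b)
    (hint : ∀ n : ℤ, q ((n : K)) = ((n ^ 2 : ℤ) : L))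
    (hbil_left : ∀ a b c : K, polarMap q (a + b) c = polarMap q a c + polarMap q b c)
    (hbil_right : ∀ a b c : K, polarMap q a (b + c) = polarMap q a b + polarMap q a c)
    (I : Set K) :
    ((∀ x ∈ I, ∀ y ∈ I, x + y ∈ I) → (∀ x ∈ I, ∀ r : K, x * r ∈ I) →
      ((∀ x ∈ {a : K | ∀ b ∈ I, polarMap q a b = 0}, ∀ y ∈ {a : K | ∀ b ∈ I, polarMap q a b = 0},
          x + y ∈ {a : K | ∀ b ∈ I, polarMap q a b = 0}) ∧
       (∀ x ∈ {a : K | ∀ b ∈ I, polarMap q a b = 0}, ∀ r : K,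
          x * r ∈ {a : K | ∀ b ∈ I, polarMap q a b = 0}))) ∧
    ((∀ x ∈ I, ∀ y ∈ I, x + y ∈ I) → (∀ x ∈ I, ∀ r : K, r * x ∈ I) →
      ((∀ x ∈ {a : K | ∀ b ∈ I, polarMap q a b = 0}, ∀ y ∈ {a : K | ∀ b ∈ I, polarMap q a b = 0},
          x + y ∈ {a : K | ∀ b ∈ I, polarMap q a b = 0}) ∧
       (∀ x ∈ {a : K | ∀ b ∈ I, polarMap q a b = 0}, ∀ r : K,
          r * x ∈ {a : K | ∀ b ∈ I, polarMap q a b = 0}))) := by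
  have hsymm : ∀ a b : K, polarMap q a b = polarMap q b a := by
    intro a b; simp only [polarMap, add_comm]; ring
  have hmr : ∀ a b c : K, polarMap q (a * c) (b * c) = polarMap q a b * q c := by
    intro a b c
    simp only [polarMap, ← add_mul, hmul]
    ring
  have hqadd : ∀ c d : K, q (c + d) = polarMap q c d + q c + q d := by
    intro c d; simp [polarMap]; ring
  have key : ∀ a b c d : K,
      polarMap q (a * c) (b * d) + polarMap q (a * d) (b * c)
        = polarMap q a b * polarMap q c d := by
    intro a b c d
    have h1 := hmr a b (c + d)
    rw [mul_add a c d, mul_add b c d, hbil_left, hbil_right, hbil_right, hqadd,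
      hmr a b c, hmr a b d] at h1
    linear_combination h1
  constructor
  · intro _hadd hI
    constructor
    · intro x hx y hy b hb
      rw [hbil_left, hx b hb, hy b hb, add_zero]
    · intro x hx r b hb
      have h := key x b r 1
      rw [mul_one, mul_one, hx b hb, zero_mul, hx (b * r) (hI b hb r)] at h
      linear_combination h
  · intro _hadd hI
    constructor
    · intro x hx y hy b hb
      rw [hbil_left, hx b hb, hy b hb, add_zero]
    · intro x hx r b hb
      have h := key r 1 x b
      rw [one_mul, one_mul, hx b hb, mul_zero, hsymm (r * b) x,
        hx (r * b) (hI b hb r)] at h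
      linear_combination h
end

section
/- Let q : K → L be a multiplicative quadratic map with associated biadditive form f. Then rad(q) := {a ∈ K : q(a) = 0 and f(a,b) = 0 for all b ∈ K} is a (two-sided) ideal of K. -/
theorem stmt_3 {K L : Type*} [Ring K] [CommRing L] (q : K → L)
    (hmul : ∀ a b : K, q (a * b) = q a * q b)
    (hint : ∀ n : ℤ, q ((n : K)) = ((n ^ 2 : ℤ) : L))
    (hbil_left : ∀ a b c : K, polarMap q (a + b) c = polarMap q a c + polarMap q b c)
    (hbil_right : ∀ a b c : K, polarMap q a (b + c) = polarMap q a b + polarMap q a c) :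
    ∃ J : TwoSidedIdeal K,
      (J : Set K) = {a : K | q a = 0 ∧ ∀ b : K, polarMap q a b = 0} := by
  have hq0 : q 0 = 0 := by simpa using hint 0
  have hq1 : q 1 = 1 := by simpa using hint 1
  have hpolar0 : ∀ b : K, polarMap q 0 b = 0 := by
    intro b
    have := hbil_left 0 0 b
    rw [add_zero] at this
    linear_combination -this
  have hsymm : ∀ a b : K, polarMap q a b = polarMap q b a := by
    intro a b; unfold polarMap; rw [add_comm a b]; ring
  have hneg : ∀ a b : K, polarMap q (-a) b = - polarMap q a b := by
    intro a b
    have := hbil_left a (-a) b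
    rw [add_neg_cancel, hpolar0] at this
    linear_combination -this
  -- scale identity: polar (c*a) (c*b) = q c * polar a b
  have hscaleL : ∀ c a b : K, polarMap q (c * a) (c * b) = q c * polarMap q a b := by
    intro c a b
    simp only [polarMap, ← mul_add, hmul]
    ring
  have hscaleR : ∀ c a b : K, polarMap q (a * c) (b * c) = polarMap q a b * q c := by
    intro c a b
    simp only [polarMap, ← add_mul, hmul]
    ring
  -- key identity: polar (c*a) b + polar a (c*b) = polar c 1 * polar a b
  have hkeyL : ∀ c a b : K, polarMap q (c * a) b + polarMap q a (c * b)
      = polarMap q c 1 * polarMap q a b := by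
    intro c a b
    have h1 : polarMap q ((c + 1) * a) ((c + 1) * b) = q (c + 1) * polarMap q a b :=
      hscaleL (c + 1) a b
    rw [add_mul, one_mul, add_mul, one_mul, hbil_left, hbil_right, hbil_right,
      hscaleL] at h1
    have hq : q (c + 1) = q c + q 1 + polarMap q c 1 := by unfold polarMap; ring
    rw [hq, hq1] at h1
    linear_combination h1
  have hkeyR : ∀ c a b : K, polarMap q (a * c) b + polarMap q a (b * c)
      = polarMap q c 1 * polarMap q a b := by
    intro c a b
    have h1 : polarMap q (a * (c + 1)) (b * (c + 1)) = polarMap q a b * q (c + 1) :=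
      hscaleR (c + 1) a b
    rw [mul_add, mul_one, mul_add, mul_one, hbil_left, hbil_right, hbil_right,
      hscaleR] at h1
    have hq : q (c + 1) = q c + q 1 + polarMap q c 1 := by unfold polarMap; ring
    rw [hq, hq1] at h1
    linear_combination h1
  refine ⟨TwoSidedIdeal.mk' {a : K | q a = 0 ∧ ∀ b : K, polarMap q a b = 0}
    ⟨hq0, hpolar0⟩ ?_ ?_ ?_ ?_, TwoSidedIdeal.coe_mk' _ _ _ _ _ _⟩
  · rintro x y ⟨hx, hx'⟩ ⟨hy, hy'⟩
    constructor
    · have := hx' y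
      simp only [polarMap, hx, hy] at this
      linear_combination this
    · intro b; rw [hbil_left, hx', hy', add_zero]
  · rintro x ⟨hx, hx'⟩
    constructor
    · have := hx' (-x)
      simp only [polarMap, add_neg_cancel, hq0, hx] at this
      linear_combination -this
    · intro b; rw [hneg, hx' b, neg_zero]
  · rintro x y ⟨hy, hy'⟩
    refine ⟨by rw [hmul, hy, mul_zero], fun b => ?_⟩
    have := hkeyL x y b
    rw [hy' (x * b), hy' b, add_zero, mul_zero] at this
    exact this
  · rintro x y ⟨hx, hx'⟩
    refine ⟨by rw [hmul, hx, zero_mul], fun b => ?_⟩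
    have := hkeyR y x b
    rw [hx' (b * y), hx' b, add_zero, mul_zero] at this
    exact this
end

section
/- Let q : K → L be a multiplicative quadratic map with associated biadditive form f. Suppose a ∈ K satisfies f(a,b) = 0 for all b ∈ K. Then q(a)·f(b,c) = 0 = f(b,c)·q(a) for all b,c ∈ K. -/
theorem stmt_5 {K L : Type*} [Ring K] [CommRing L] (q : K → L)
    (hmul : ∀ a b : K, q (a * b) = q a * q b)
    (hint : ∀ n : ℤ, q ((n : K)) = ((n ^ 2 : ℤ) : L))
    (hbil_left : ∀ a b c : K, polarMap q (a + b) c = polarMap q a c + polarMap q b c)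
    (hbil_right : ∀ a b c : K, polarMap q a (b + c) = polarMap q a b + polarMap q a c)
    (a : K) (ha : ∀ b : K, polarMap q a b = 0) :
    ∀ b c : K, q a * polarMap q b c = 0 ∧ polarMap q b c * q a = 0 := by
  have hq1 : q 1 = 1 := by simpa using hint 1
  have hsymm : ∀ u v : K, polarMap q u v = polarMap q v u := by
    intro u v; unfold polarMap; rw [add_comm]; ring
  -- q (u+v) = q u + q v + polar
  have hL : ∀ u v : K, q (u + v) = q u + q v + polarMap q u v := by
    intro u v; unfold polarMap; ring
  -- polar of left-scaled pair
  have hmulL : ∀ x y z : K, polarMap q (x * y) (x * z) = q x * polarMap q y z := by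
    intro x y z
    unfold polarMap
    rw [← mul_add, hmul, hmul, hmul]; ring
  have hmulR : ∀ x y z : K, polarMap q (y * x) (z * x) = polarMap q y z * q x := by
    intro x y z
    unfold polarMap
    rw [← add_mul, hmul, hmul, hmul]; ring
  -- q is additive on a + anything
  have hadd : ∀ x : K, q (a + x) = q a + q x := by
    intro x
    have h := ha x
    unfold polarMap at h
    linear_combination h
  -- q a * polarMap q 1 y = 0
  have haP1 : ∀ y : K, q a * polarMap q 1 y = 0 := by
    intro y
    have h := hmulL a 1 y
    rw [mul_one] at h
    rw [← h, ha]
  have hP1a : ∀ y : K, polarMap q 1 y * q a = 0 := by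
    intro y
    have h := hmulR a 1 y
    rw [one_mul] at h
    rw [← h]; exact ha _
  -- three-term expansion
  have split3 : ∀ u v w : K, q (u + v + w)
      = q u + q v + q w + polarMap q u v + polarMap q u w + polarMap q v w := by
    intro u v w
    have h1 := hL (u + v) w
    have h2 := hL u v
    have h3 := hbil_left u v w
    linear_combination h1 + h2 + h3
  -- a*y is in the radical
  have hleft : ∀ y x : K, polarMap q (a * y) x = 0 := by
    intro y x
    have hexp : (a + x) * (1 + y) = a + (a * y + x + x * y) := by noncomm_ring
    have e1 : q ((a + x) * (1 + y)) = (q a + q x) * (1 + q y + polarMap q 1 y) := by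
      rw [hmul, hadd, hL 1 y, hq1]
    have e2 : q ((a + x) * (1 + y))
        = q a + (q (a * y) + q x + q (x * y) + polarMap q (a * y) x
            + polarMap q (a * y) (x * y) + polarMap q x (x * y)) := by
      rw [hexp, hadd, split3]
    have e3 : polarMap q (a * y) (x * y) = polarMap q a x * q y := hmulR y a x
    have e4 : polarMap q x (x * y) = q x * polarMap q 1 y := by
      have := hmulL x 1 y; rw [mul_one] at this; exact this
    have e5 : q (a * y) = q a * q y := hmul a y
    have e6 : q (x * y) = q x * q y := hmul x y
    have e7 : polarMap q a x = 0 := ha x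
    have e8 := haP1 y
    linear_combination e1 - e2 - e3 - e4 - e5 - e6 - q y * e7 + e8
  -- y*a is in the radical
  have hright : ∀ y x : K, polarMap q (y * a) x = 0 := by
    intro y x
    have hexp : (1 + y) * (a + x) = a + (y * a + x + y * x) := by noncomm_ring
    have e1 : q ((1 + y) * (a + x)) = (1 + q y + polarMap q 1 y) * (q a + q x) := by
      rw [hmul, hadd, hL 1 y, hq1]
    have e2 : q ((1 + y) * (a + x))
        = q a + (q (y * a) + q x + q (y * x) + polarMap q (y * a) x
            + polarMap q (y * a) (y * x) + polarMap q x (y * x)) := by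
      rw [hexp, hadd, split3]
    have e3 : polarMap q (y * a) (y * x) = q y * polarMap q a x := hmulL y a x
    have e4 : polarMap q x (y * x) = polarMap q 1 y * q x := by
      have := hmulR x 1 y; rw [one_mul] at this
      exact this
    have e5 : q (y * a) = q y * q a := hmul y a
    have e6 : q (y * x) = q y * q x := hmul y x
    have e7 : polarMap q a x = 0 := ha x
    have e8 := hP1a y
    linear_combination e1 - e2 - e3 - e4 - e5 - e6 - q y * e7 + e8
  intro b c
  constructor
  · rw [← hmulL a b c]
    exact hleft b (a * c)
  · rw [← hmulR a b c]
    exact hright b (c * a)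
end

section
/- Let q : K → L be a multiplicative quadratic map with associated biadditive form f. Suppose there exists a ∈ K with f(a,b)=0 for all b ∈ K such that q(a) is not a zero divisor in L. Then L has characteristic 2 and q is a ring homomorphism (i.e. f is identically zero and q is additive and multiplicative with q(1)=1). -/
theorem stmt_6 {K L : Type*} [Ring K] [CommRing L] (q : K → L)
    (hmul : ∀ a b : K, q (a * b) = q a * q b)
    (hint : ∀ n : ℤ, q ((n : K)) = ((n ^ 2 : ℤ) : L))
    (hbil_left : ∀ a b c : K, polarMap q (a + b) c = polarMap q a c + polarMap q b c)
    (hbil_right : ∀ a b c : K, polarMap q a (b + c) = polarMap q a b + polarMap q a c)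
    (a : K) (ha : ∀ b : K, polarMap q a b = 0)
    (hnzd : ∀ x : L, q a * x = 0 → x = 0) :
    (2 : L) = 0 ∧ (∀ b c : K, polarMap q b c = 0) ∧
      (∀ b c : K, q (b + c) = q b + q c) ∧ q 1 = 1 := by
  have hq1 : q 1 = 1 := by simpa using hint 1
  have hfa : ∀ b : K, q (a + b) = q a + q b := by
    intro b
    have h := ha b
    simp only [polarMap] at h
    linear_combination h
  have hq2 : q ((2 : K)) = (4 : L) := by
    have h := hint 2
    norm_num at h
    simpa using h
  have h2 : (2 : L) = 0 := by
    apply hnzd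
    have h1 : q (a + a) = q a + q a := hfa a
    have h2' : q (a + a) = (4 : L) * q a := by
      have : a + a = (2 : K) * a := by noncomm_ring
      rw [this, hmul, hq2]
    have : (4 : L) * q a = q a + q a := by rw [← h2', h1]
    linear_combination this
  have hone : ∀ x : K, q (1 + x) = 1 + q x := by
    intro x
    have key : q a * (q (1 + x) - (1 + q x)) = 0 := by
      have e1 : a * (1 + x) = a + a * x := by noncomm_ring
      have e2 : q (a + a * x) = q a + q (a * x) := hfa (a * x)
      have e3 : q a * q (1 + x) = q a + q a * q x := by
        rw [← hmul, e1, e2, hmul]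
      linear_combination e3
    have := hnzd _ key
    linear_combination this
  have hrt : ∀ x y : K, polarMap q x (x * y) = 0 := by
    intro x y
    have e1 : x * (1 + y) = x + x * y := by noncomm_ring
    have e2 : q (x + x * y) = q x * (1 + q y) := by
      rw [← e1, hmul, hone]
    simp only [polarMap]
    rw [e2, hmul]
    ring
  have hf1 : ∀ x : K, polarMap q 1 x = 0 := by
    intro x
    simp only [polarMap, hq1, hone]
    ring
  have hf : ∀ b c : K, polarMap q b c = 0 := by
    intro b c
    have key : polarMap q (1 + b) ((1 + b) * c) = 0 := hrt (1 + b) c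
    have e : (1 + b) * c = c + b * c := by noncomm_ring
    rw [e, hbil_left, hbil_right, hbil_right, hf1, hf1, hrt b c] at key
    -- key : 0 + 0 + (polarMap q b c + 0) = 0  (roughly)
    linear_combination key
  refine ⟨h2, hf, ?_, hq1⟩
  intro b c
  have h := hf b c
  simp only [polarMap] at h
  linear_combination h
end

section
/- Let F be a commutative ring, K an F-algebra whose finitely generated F-submodules are free, L a commutative associative F-algebra, and q : K → L a multiplicative F-quadratic map with associated F-bilinear form f. Then the base-change map q̃ : L ⊗_F K → L, defined on x = Σ λᵢ ⊗ aᵢ by q̃(x) = Σᵢ λᵢ² q(aᵢ) + Σ_{i<j} λᵢλⱼ f(aᵢ,aⱼ), is a well-defined multiplicative L-quadratic map; in particular q̃(xy) = q̃(x)q̃(y) for all x, y ∈ L ⊗_F K. -/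
open TensorProduct

namespace StmtAux9

variable {F K L : Type*} [CommRing F] [Ring K] [CommRing L] [Algebra F K] [Algebra F L]

section PolarLemmas

variable (q : K → L)

theorem qadd (x y : K) : q (x + y) = q x + q y + polarMap q x y := by
  unfold polarMap; ring

theorem polar_comm (a b : K) : polarMap q a b = polarMap q b a := by
  unfold polarMap; rw [add_comm a b]; ring

theorem polar_self (hquad : ∀ (lam : F) (a : K), q (lam • a) = algebraMap F L lam ^ 2 * q a)
    (a : K) : polarMap q a a = 2 * q a := by
  unfold polarMap
  have h2 : a + a = (2 : F) • a := (two_smul F a).symm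
  have h3 : algebraMap F L 2 = 2 := map_ofNat _ 2
  rw [h2, hquad, h3]; ring

theorem polar_mul_left (hmul : ∀ a b : K, q (a * b) = q a * q b) (a b c : K) :
    polarMap q (a * b) (a * c) = q a * polarMap q b c := by
  unfold polarMap
  rw [← mul_add, hmul, hmul, hmul]; ring

theorem polar_mul_right (hmul : ∀ a b : K, q (a * b) = q a * q b) (a b c : K) :
    polarMap q (a * c) (b * c) = polarMap q a b * q c := by
  unfold polarMap
  rw [← add_mul, hmul, hmul, hmul]; ring

theorem polar_key (hmul : ∀ a b : K, q (a * b) = q a * q b)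
    (hbil_left : ∀ a b c : K, polarMap q (a + b) c = polarMap q a c + polarMap q b c)
    (hbil_right : ∀ a b c : K, polarMap q a (b + c) = polarMap q a b + polarMap q a c)
    (a b c d : K) :
    polarMap q (a * b) (c * d) + polarMap q (a * d) (c * b) =
      polarMap q a c * polarMap q b d := by
  have h := hmul (a + c) (b + d)
  have e : (a + c) * (b + d) = a * b + a * d + (c * b + c * d) := by
    rw [add_mul, mul_add, mul_add]
  rw [e, qadd q (a * b + a * d) (c * b + c * d), qadd q (a * b) (a * d),
      qadd q (c * b) (c * d), qadd q a c, qadd q b d] at h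
  rw [hbil_left, hbil_right, hbil_right] at h
  linear_combination h - hmul a b - hmul a d - hmul c b - hmul c d
    - polar_mul_left q hmul a b d - polar_mul_left q hmul c b d
    - polar_mul_right q hmul a c b - polar_mul_right q hmul a c d

end PolarLemmas

section Lists

variable (q : K → L)

def crossT (p r : L × K) : L := p.1 * r.1 * polarMap q p.2 r.2

def valT : List (L × K) → L
  | [] => 0
  | p :: t => p.1 ^ 2 * q p.2 + (t.map (crossT q p)).sum + valT t

def crossSum (s t : List (L × K)) : L := (s.map fun p => (t.map (crossT q p)).sum).sum

variable (F) in
noncomputable def mkT : List (L × K) → L ⊗[F] K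
  | [] => 0
  | p :: t => p.1 ⊗ₜ[F] p.2 + mkT t

theorem sum_map_add {α : Type*} (l : List α) (f g : α → L) :
    (l.map fun x => f x + g x).sum = (l.map f).sum + (l.map g).sum := by
  induction l with
  | nil => simp
  | cons a t ih => simp only [List.map_cons, List.sum_cons, ih]; ring

theorem crossT_comm (a b : L × K) : crossT q a b = crossT q b a := by
  unfold crossT; rw [polar_comm]; ring

theorem crossSum_nil_left (t : List (L × K)) : crossSum q [] t = 0 := rfl

theorem crossSum_cons_left (p : L × K) (s t : List (L × K)) :
    crossSum q (p :: s) t = (t.map (crossT q p)).sum + crossSum q s t := by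
  simp [crossSum]

theorem crossSum_nil_right (s : List (L × K)) : crossSum q s [] = 0 := by
  simp [crossSum]

theorem crossSum_cons_right (s : List (L × K)) (r : L × K) (t : List (L × K)) :
    crossSum q s (r :: t) = (s.map fun p => crossT q p r).sum + crossSum q s t := by
  simp only [crossSum, List.map_cons, List.sum_cons]
  rw [sum_map_add]

theorem crossSum_append_right (s t₁ t₂ : List (L × K)) :
    crossSum q s (t₁ ++ t₂) = crossSum q s t₁ + crossSum q s t₂ := by
  simp only [crossSum, List.map_append, List.sum_append]
  rw [sum_map_add]

theorem crossSum_comm (s t : List (L × K)) : crossSum q s t = crossSum q t s := by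
  induction s with
  | nil => rw [crossSum_nil_left, crossSum_nil_right]
  | cons p s ih =>
    have h : t.map (crossT q p) = t.map fun r => crossT q r p :=
      List.map_congr_left fun r _ => crossT_comm q p r
    rw [crossSum_cons_left, crossSum_cons_right, ih, h]

theorem valT_append (s t : List (L × K)) :
    valT q (s ++ t) = valT q s + valT q t + crossSum q s t := by
  induction s with
  | nil => simp [valT, crossSum_nil_left]
  | cons p s ih =>
    simp only [List.cons_append, valT, List.map_append, List.append_eq, List.sum_append,
      ih, crossSum_cons_left]
    ring

theorem mkT_append (s t : List (L × K)) : mkT F (s ++ t) = mkT F s + mkT F t := by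
  induction s with
  | nil => simp [mkT]
  | cons p s ih => simp [mkT, ih, add_assoc]

theorem mkT_surjective (x : L ⊗[F] K) : ∃ l, mkT F l = x := by
  induction x with
  | zero => exact ⟨[], rfl⟩
  | tmul a b => exact ⟨[(a, b)], by simp [mkT]⟩
  | add x y ihx ihy =>
    obtain ⟨s, rfl⟩ := ihx
    obtain ⟨t, rfl⟩ := ihy
    exact ⟨s ++ t, mkT_append s t⟩

end Lists

section Bt

variable (q : K → L) (g : K →ₗ[F] K →ₗ[F] L)

noncomputable def innerB (a : K) : L ⊗[F] K →ₗ[L] L :=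
  AlgebraTensorModule.lift (LinearMap.toSpanSingleton L (K →ₗ[F] L) (g a))

theorem innerB_tmul (a : K) (mu : L) (b : K) : innerB g a (mu ⊗ₜ[F] b) = mu * g a b := by
  simp [innerB, LinearMap.toSpanSingleton_apply, smul_eq_mul]

noncomputable def innerBL : K →ₗ[F] (L ⊗[F] K →ₗ[L] L) where
  toFun := innerB g
  map_add' a b := by
    apply LinearMap.ext; intro x
    induction x with
    | zero => simp
    | tmul mu c => simp only [innerB_tmul, map_add, LinearMap.add_apply]; ring
    | add u v ihu ihv =>
      simp only [map_add, LinearMap.add_apply] at *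
      rw [ihu, ihv]
  map_smul' c a := by
    apply LinearMap.ext; intro x
    induction x with
    | zero => simp
    | tmul mu b =>
      simp only [innerB_tmul, map_smul, LinearMap.smul_apply, RingHom.id_apply]
      rw [Algebra.smul_def, Algebra.smul_def]
      ring
    | add u v ihu ihv =>
      simp only [map_add, LinearMap.add_apply] at *
      rw [ihu, ihv]

theorem innerBL_apply (a : K) : innerBL g a = innerB g a := rfl

noncomputable def BtM : L ⊗[F] K →ₗ[L] L ⊗[F] K →ₗ[L] L :=
  AlgebraTensorModule.lift
    (LinearMap.toSpanSingleton L (K →ₗ[F] (L ⊗[F] K →ₗ[L] L)) (innerBL g))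

theorem BtM_tmul (lam : L) (a : K) (mu : L) (b : K) :
    BtM g (lam ⊗ₜ[F] a) (mu ⊗ₜ[F] b) = lam * mu * g a b := by
  simp only [BtM, AlgebraTensorModule.lift_tmul, LinearMap.toSpanSingleton_apply,
    LinearMap.smul_apply, innerBL_apply, innerB_tmul, smul_eq_mul]
  ring

theorem crossSum_eq_BtM (hg : ∀ a b, g a b = polarMap q a b) (s t : List (L × K)) :
    crossSum q s t = BtM g (mkT F s) (mkT F t) := by
  induction s with
  | nil => simp [mkT, crossSum_nil_left]
  | cons p s ih =>
    rw [crossSum_cons_left, ih, show mkT F (p :: s) = p.1 ⊗ₜ[F] p.2 + mkT F s from rfl,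
      map_add, LinearMap.add_apply]
    clear ih
    congr 1
    induction t with
    | nil => simp [mkT]
    | cons r t iht =>
      rw [show mkT F (r :: t) = r.1 ⊗ₜ[F] r.2 + mkT F t from rfl, map_add,
        List.map_cons, List.sum_cons, iht, BtM_tmul]
      unfold crossT
      rw [hg]

end Bt

section WellDefined

variable (q : K → L)

theorem mkT_ofList (l : List (L × K)) :
    mkT F l = AddCon.mk' (addConGen (TensorProduct.Eqv F L K)) (FreeAddMonoid.ofList l) := by
  induction l with
  | nil =>
    rw [show FreeAddMonoid.ofList ([] : List (L × K)) = 0 from rfl, map_zero]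
    rfl
  | cons p t ih =>
    rw [show FreeAddMonoid.ofList (p :: t) = FreeAddMonoid.of p + FreeAddMonoid.ofList t from rfl,
      map_add, ← ih]
    rfl

theorem mkT_rel {w x : FreeAddMonoid (L × K)}
    (h : AddConGen.Rel (TensorProduct.Eqv F L K) w x) :
    mkT F (FreeAddMonoid.toList w) = mkT F (FreeAddMonoid.toList x) := by
  rw [mkT_ofList, mkT_ofList, FreeAddMonoid.ofList_toList, FreeAddMonoid.ofList_toList]
  exact (AddCon.eq _).mpr h

theorem valT_wd (hq0 : q 0 = 0)
    (hquad : ∀ (lam : F) (a : K), q (lam • a) = algebraMap F L lam ^ 2 * q a)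
    (g : K →ₗ[F] K →ₗ[F] L) (hg : ∀ a b, g a b = polarMap q a b) :
    ∀ a b : FreeAddMonoid (L × K), (addConGen (TensorProduct.Eqv F L K)) a b →
      valT q (FreeAddMonoid.toList a) = valT q (FreeAddMonoid.toList b) := by
  intro a b hab
  induction hab with
  | of x y h =>
    cases h with
    | of_zero_left n =>
      show valT q [((0 : L), n)] = valT q []
      simp [valT]
    | of_zero_right m =>
      show valT q [(m, (0 : K))] = valT q []
      simp [valT, hq0]
    | of_add_left m₁ m₂ n =>
      show valT q [(m₁, n), (m₂, n)] = valT q [(m₁ + m₂, n)]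
      simp only [valT, crossT, List.map_cons, List.map_nil, List.sum_cons, List.sum_nil]
      rw [polar_self q hquad]
      ring
    | of_add_right m n₁ n₂ =>
      show valT q [(m, n₁), (m, n₂)] = valT q [(m, n₁ + n₂)]
      simp only [valT, crossT, List.map_cons, List.map_nil, List.sum_cons, List.sum_nil]
      unfold polarMap
      ring
    | of_smul r m n =>
      show valT q [(r • m, n)] = valT q [(m, r • n)]
      simp only [valT, List.map_nil, List.sum_nil]
      rw [hquad, Algebra.smul_def]
      ring
    | add_comm x y =>
      show valT q (FreeAddMonoid.toList x ++ FreeAddMonoid.toList y)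
          = valT q (FreeAddMonoid.toList y ++ FreeAddMonoid.toList x)
      rw [valT_append, valT_append, crossSum_comm]
      ring
  | refl x => rfl
  | symm _ ih => exact ih.symm
  | trans _ _ ih₁ ih₂ => exact ih₁.trans ih₂
  | add h₁ h₂ ih₁ ih₂ =>
    rename_i w x y z
    show valT q (FreeAddMonoid.toList w ++ FreeAddMonoid.toList y)
        = valT q (FreeAddMonoid.toList x ++ FreeAddMonoid.toList z)
    rw [valT_append, valT_append, ih₁, ih₂, crossSum_eq_BtM q g hg, crossSum_eq_BtM q g hg,
      mkT_rel h₁, mkT_rel h₂]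

end WellDefined

section ScaleMul

variable (q : K → L)

def scaleT (mu : L) (l : List (L × K)) : List (L × K) := l.map fun p => (mu * p.1, p.2)

theorem mkT_scaleT (mu : L) (l : List (L × K)) :
    mkT F (scaleT mu l) = mu • mkT F l := by
  induction l with
  | nil => simp [scaleT, mkT]
  | cons p t ih =>
    show mkT F ((mu * p.1, p.2) :: scaleT mu t) = mu • mkT F (p :: t)
    rw [show mkT F ((mu * p.1, p.2) :: scaleT mu t)
        = (mu * p.1) ⊗ₜ[F] p.2 + mkT F (scaleT mu t) from rfl,
      show mkT F (p :: t) = p.1 ⊗ₜ[F] p.2 + mkT F t from rfl,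
      ih, smul_add, TensorProduct.smul_tmul', smul_eq_mul]

theorem valT_scaleT (mu : L) (l : List (L × K)) :
    valT q (scaleT mu l) = mu ^ 2 * valT q l := by
  induction l with
  | nil => simp [scaleT, valT]
  | cons p t ih =>
    show valT q ((mu * p.1, p.2) :: scaleT mu t) = mu ^ 2 * valT q (p :: t)
    simp only [valT]
    rw [ih]
    have h1 : ((scaleT mu t).map (crossT q (mu * p.1, p.2))).sum
        = mu ^ 2 * (t.map (crossT q p)).sum := by
      unfold scaleT
      rw [List.map_map]
      have h2 : (t.map (crossT q (mu * p.1, p.2) ∘ fun r => (mu * r.1, r.2)))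
          = t.map fun r => mu ^ 2 * crossT q p r :=
        List.map_congr_left fun r _ => by
          show crossT q (mu * p.1, p.2) (mu * r.1, r.2) = mu ^ 2 * crossT q p r
          unfold crossT
          dsimp only
          ring
      rw [h2, List.sum_map_mul_left]
    rw [h1]
    ring

def rowT (p : L × K) (t : List (L × K)) : List (L × K) :=
  t.map fun r => (p.1 * r.1, p.2 * r.2)

noncomputable def mulT : List (L × K) → List (L × K) → List (L × K)
  | [], _ => []
  | p :: s, t => rowT p t ++ mulT s t

theorem mkT_rowT (p : L × K) (t : List (L × K)) :
    mkT F (rowT p t) = (p.1 ⊗ₜ[F] p.2) * mkT F t := by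
  induction t with
  | nil => simp [rowT, mkT]
  | cons r t ih =>
    show mkT F ((p.1 * r.1, p.2 * r.2) :: rowT p t) = (p.1 ⊗ₜ[F] p.2) * mkT F (r :: t)
    rw [show mkT F ((p.1 * r.1, p.2 * r.2) :: rowT p t)
        = (p.1 * r.1) ⊗ₜ[F] (p.2 * r.2) + mkT F (rowT p t) from rfl,
      show mkT F (r :: t) = r.1 ⊗ₜ[F] r.2 + mkT F t from rfl,
      ih, mul_add, Algebra.TensorProduct.tmul_mul_tmul]

theorem mkT_mulT (s t : List (L × K)) :
    mkT F (mulT s t) = mkT F s * mkT F t := by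
  induction s with
  | nil =>
    show mkT F ([] : List (L × K)) = mkT F ([] : List (L × K)) * mkT F t
    rw [show mkT F ([] : List (L × K)) = 0 from rfl, zero_mul]
  | cons p s ih =>
    show mkT F (rowT p t ++ mulT s t) = mkT F (p :: s) * mkT F t
    rw [mkT_append, mkT_rowT, ih,
      show mkT F (p :: s) = p.1 ⊗ₜ[F] p.2 + mkT F s from rfl, add_mul]

theorem valT_rowT (hmul : ∀ a b : K, q (a * b) = q a * q b) (p : L × K)
    (t : List (L × K)) :
    valT q (rowT p t) = p.1 ^ 2 * q p.2 * valT q t := by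
  induction t with
  | nil => simp [rowT, valT]
  | cons r t ih =>
    show valT q ((p.1 * r.1, p.2 * r.2) :: rowT p t) = p.1 ^ 2 * q p.2 * valT q (r :: t)
    simp only [valT]
    rw [ih]
    have h1 : ((rowT p t).map (crossT q (p.1 * r.1, p.2 * r.2))).sum
        = p.1 ^ 2 * q p.2 * (t.map (crossT q r)).sum := by
      unfold rowT
      rw [List.map_map]
      have h2 : (t.map (crossT q (p.1 * r.1, p.2 * r.2) ∘ fun x => (p.1 * x.1, p.2 * x.2)))
          = t.map fun x => p.1 ^ 2 * q p.2 * crossT q r x :=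
        List.map_congr_left fun x _ => by
          show crossT q (p.1 * r.1, p.2 * r.2) (p.1 * x.1, p.2 * x.2)
              = p.1 ^ 2 * q p.2 * crossT q r x
          unfold crossT
          dsimp only
          rw [polar_mul_left q hmul]
          ring
      rw [h2, List.sum_map_mul_left]
    rw [h1, hmul p.2 r.2]
    ring

theorem crossT_mul_diag (hmul : ∀ a b : K, q (a * b) = q a * q b) (p w r : L × K) :
    crossT q (p.1 * r.1, p.2 * r.2) (w.1 * r.1, w.2 * r.2)
      = crossT q p w * (r.1 ^ 2 * q r.2) := by
  unfold crossT
  dsimp only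
  rw [polar_mul_right q hmul]
  ring

theorem crossT_mul_pair (hmul : ∀ a b : K, q (a * b) = q a * q b)
    (hbil_left : ∀ a b c : K, polarMap q (a + b) c = polarMap q a c + polarMap q b c)
    (hbil_right : ∀ a b c : K, polarMap q a (b + c) = polarMap q a b + polarMap q a c)
    (p w r r' : L × K) :
    crossT q (p.1 * r.1, p.2 * r.2) (w.1 * r'.1, w.2 * r'.2)
      + crossT q (p.1 * r'.1, p.2 * r'.2) (w.1 * r.1, w.2 * r.2)
      = crossT q p w * crossT q r r' := by
  unfold crossT
  dsimp only
  linear_combination (p.1 * w.1 * r.1 * r'.1) *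
    polar_key q hmul hbil_left hbil_right p.2 r.2 w.2 r'.2

theorem crossRow (hmul : ∀ a b : K, q (a * b) = q a * q b)
    (hbil_left : ∀ a b c : K, polarMap q (a + b) c = polarMap q a c + polarMap q b c)
    (hbil_right : ∀ a b c : K, polarMap q a (b + c) = polarMap q a b + polarMap q a c)
    (p w : L × K) (t : List (L × K)) :
    crossSum q (rowT p t) (rowT w t) = crossT q p w * valT q t := by
  induction t with
  | nil => simp [rowT, crossSum_nil_left, valT]
  | cons r t ih =>
    show crossSum q ((p.1 * r.1, p.2 * r.2) :: rowT p t)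
        ((w.1 * r.1, w.2 * r.2) :: rowT w t) = crossT q p w * valT q (r :: t)
    rw [crossSum_cons_left, crossSum_cons_right]
    simp only [List.map_cons, List.sum_cons, valT]
    have hdiag := crossT_mul_diag q hmul p w r
    have hS : ((rowT w t).map (crossT q (p.1 * r.1, p.2 * r.2))).sum
        + ((rowT p t).map fun x => crossT q x (w.1 * r.1, w.2 * r.2)).sum
        = crossT q p w * (t.map (crossT q r)).sum := by
      unfold rowT
      rw [List.map_map, List.map_map, ← sum_map_add]
      have h2 : (t.map fun x =>
            (crossT q (p.1 * r.1, p.2 * r.2) ∘ fun y => (w.1 * y.1, w.2 * y.2)) x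
            + ((fun z => crossT q z (w.1 * r.1, w.2 * r.2)) ∘
                fun y => (p.1 * y.1, p.2 * y.2)) x)
          = t.map fun x => crossT q p w * crossT q r x :=
        List.map_congr_left fun x _ => by
          show crossT q (p.1 * r.1, p.2 * r.2) (w.1 * x.1, w.2 * x.2)
              + crossT q (p.1 * x.1, p.2 * x.2) (w.1 * r.1, w.2 * r.2)
              = crossT q p w * crossT q r x
          exact crossT_mul_pair q hmul hbil_left hbil_right p w r x
      rw [h2, List.sum_map_mul_left]
    linear_combination hdiag + hS + ih

theorem crossSum_rowT_mulT (hmul : ∀ a b : K, q (a * b) = q a * q b)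
    (hbil_left : ∀ a b c : K, polarMap q (a + b) c = polarMap q a c + polarMap q b c)
    (hbil_right : ∀ a b c : K, polarMap q a (b + c) = polarMap q a b + polarMap q a c)
    (p : L × K) (t s : List (L × K)) :
    crossSum q (rowT p t) (mulT s t) = (s.map (crossT q p)).sum * valT q t := by
  induction s with
  | nil => simp [mulT, crossSum_nil_right]
  | cons w s ih =>
    show crossSum q (rowT p t) (rowT w t ++ mulT s t) = _
    rw [crossSum_append_right, crossRow q hmul hbil_left hbil_right, ih]
    simp only [List.map_cons, List.sum_cons]
    ring

theorem valT_mulT (hmul : ∀ a b : K, q (a * b) = q a * q b)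
    (hbil_left : ∀ a b c : K, polarMap q (a + b) c = polarMap q a c + polarMap q b c)
    (hbil_right : ∀ a b c : K, polarMap q a (b + c) = polarMap q a b + polarMap q a c)
    (s t : List (L × K)) :
    valT q (mulT s t) = valT q s * valT q t := by
  induction s with
  | nil =>
    show valT q ([] : List (L × K)) = valT q ([] : List (L × K)) * valT q t
    rw [show valT q ([] : List (L × K)) = 0 from rfl, zero_mul]
  | cons p s ih =>
    show valT q (rowT p t ++ mulT s t) = valT q (p :: s) * valT q t
    rw [valT_append, valT_rowT q hmul, ih,
      crossSum_rowT_mulT q hmul hbil_left hbil_right p t s]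
    simp only [valT]
    ring

end ScaleMul


end StmtAux9

theorem stmt_9 {F K L : Type*} [CommRing F] [Ring K] [CommRing L]
    [Algebra F K] [Algebra F L] (q : K → L)
    (hmul : ∀ a b : K, q (a * b) = q a * q b)
    (hint : ∀ n : ℤ, q ((n : K)) = ((n ^ 2 : ℤ) : L))
    (hbil_left : ∀ a b c : K, polarMap q (a + b) c = polarMap q a c + polarMap q b c)
    (hbil_right : ∀ a b c : K, polarMap q a (b + c) = polarMap q a b + polarMap q a c)
    (hquad : ∀ (lam : F) (a : K), q (lam • a) = algebraMap F L lam ^ 2 * q a)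
    (hfsmul_left : ∀ (lam : F) (a b : K),
        polarMap q (lam • a) b = algebraMap F L lam * polarMap q a b)
    (hfsmul_right : ∀ (lam : F) (a b : K),
        polarMap q a (lam • b) = algebraMap F L lam * polarMap q a b)
    (hfree : ∀ M : Submodule F K, M.FG → Module.Free F M) :
    ∃ qt : L ⊗[F] K → L,
      (∀ (lam : L) (a : K), qt (lam ⊗ₜ[F] a) = lam ^ 2 * q a) ∧
      (∀ (lam mu : L) (a b : K),
          polarMap qt (lam ⊗ₜ[F] a) (mu ⊗ₜ[F] b) = lam * mu * polarMap q a b) ∧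
      (∀ (mu : L) (x : L ⊗[F] K), qt (mu • x) = mu ^ 2 * qt x) ∧
      (∀ x y z : L ⊗[F] K, polarMap qt (x + y) z = polarMap qt x z + polarMap qt y z) ∧
      (∀ x y z : L ⊗[F] K, polarMap qt x (y + z) = polarMap qt x y + polarMap qt x z) ∧
      (∀ (mu : L) (x y : L ⊗[F] K), polarMap qt (mu • x) y = mu * polarMap qt x y) ∧
      (∀ x y : L ⊗[F] K, qt (x * y) = qt x * qt y) := by
  classical
  have hq0 : q 0 = 0 := by simpa using hint 0
  let g : K →ₗ[F] K →ₗ[F] L := LinearMap.mk₂ F (polarMap q) hbil_left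
    (fun lam a b => by rw [hfsmul_left, Algebra.smul_def])
    hbil_right
    (fun lam a b => by rw [hfsmul_right, Algebra.smul_def])
  have hg : ∀ a b, g a b = polarMap q a b := fun a b => rfl
  have wd : ∀ a b : FreeAddMonoid (L × K), (addConGen (TensorProduct.Eqv F L K)) a b →
      StmtAux9.valT q (FreeAddMonoid.toList a) = StmtAux9.valT q (FreeAddMonoid.toList b) :=
    StmtAux9.valT_wd q hq0 hquad g hg
  let qtf : L ⊗[F] K → L := fun x =>
    AddCon.liftOn (c := addConGen (TensorProduct.Eqv F L K)) x
      (fun w => StmtAux9.valT q (FreeAddMonoid.toList w)) wd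
  have qt_mk : ∀ l : List (L × K), qtf (StmtAux9.mkT F l) = StmtAux9.valT q l := by
    intro l
    show AddCon.liftOn (c := addConGen (TensorProduct.Eqv F L K)) (StmtAux9.mkT F l)
      (fun w => StmtAux9.valT q (FreeAddMonoid.toList w)) wd = StmtAux9.valT q l
    rw [StmtAux9.mkT_ofList]
    rfl
  have polar_qt : ∀ x y : L ⊗[F] K, polarMap qtf x y = StmtAux9.BtM g x y := by
    intro x y
    obtain ⟨s, rfl⟩ := StmtAux9.mkT_surjective x
    obtain ⟨t, rfl⟩ := StmtAux9.mkT_surjective y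
    unfold polarMap
    rw [← StmtAux9.mkT_append, qt_mk, qt_mk, qt_mk, StmtAux9.valT_append,
      StmtAux9.crossSum_eq_BtM q g hg]
    ring
  refine ⟨qtf, ?_, ?_, ?_, ?_, ?_, ?_, ?_⟩
  · intro lam a
    have h : lam ⊗ₜ[F] a = StmtAux9.mkT F [(lam, a)] := by simp [StmtAux9.mkT]
    rw [h, qt_mk]
    simp [StmtAux9.valT]
  · intro lam mu a b
    rw [polar_qt, StmtAux9.BtM_tmul, hg]
  · intro mu x
    obtain ⟨s, rfl⟩ := StmtAux9.mkT_surjective x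
    rw [← StmtAux9.mkT_scaleT, qt_mk, qt_mk, StmtAux9.valT_scaleT]
  · intro x y z
    rw [polar_qt, polar_qt, polar_qt, map_add, LinearMap.add_apply]
  · intro x y z
    rw [polar_qt, polar_qt, polar_qt, map_add]
  · intro mu x y
    rw [polar_qt, polar_qt, map_smul, LinearMap.smul_apply, smul_eq_mul]
  · intro x y
    obtain ⟨s, rfl⟩ := StmtAux9.mkT_surjective x
    obtain ⟨t, rfl⟩ := StmtAux9.mkT_surjective y
    rw [← StmtAux9.mkT_mulT, qt_mk, qt_mk, qt_mk,
      StmtAux9.valT_mulT q hmul hbil_left hbil_right]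
end

section
/- Let K and L be fields with algebraic closure L̄ of L, and q : K → L a multiplicative quadratic map. Then there exist field monomorphisms φ₁, φ₂ : K → L̄ such that q(a) = φ₁(a)·φ₂(a) for all a ∈ K. -/
/-!
Put `t(a) = f(a, 1)`. If `q = φ₁ φ₂` then `t = φ₁ + φ₂`, so `φ₁(a)` and `φ₂(a)` are the roots of
`X² - t(a) X + q(a)`, whose discriminant is `t(a)² - 4 q(a)`.

If the discriminant does not vanish at some `o`, let `ρ ≠ ρ' = t(o) - ρ` be the roots at `o`. Then
`f(a, o) = φ₁(a) ρ' + φ₂(a) ρ` forces `φ₁(a) = (f(a, o) - t(a) ρ) / (ρ' - ρ)`. Identities obtained by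
expanding `f(a (c + d), b (c + d)) = f(a, b) q(c + d)` show that this formula is a ring homomorphism
for either choice of root, and that the two homomorphisms multiply to `q`.

If every discriminant vanishes, the double root `r(a)` satisfies `2 r(a) = t(a)` and `r(a)² = q(a)`.
In a domain these two equations determine an element, so `r` is a ring homomorphism and
`φ₁ = φ₂ = r`. Neither case depends on the characteristic.
-/

theorem polarMap_comm {K L : Type*} [CommRing K] [CommRing L] (q : K → L) (a b : K) :
    polarMap q a b = polarMap q b a := by
  simp only [polarMap, add_comm a b]
  ring

theorem eq_of_sq_eq_of_two_mul_eq {R : Type*} [CommRing R] [IsDomain R] {x y : R}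
    (hsq : x ^ 2 = y ^ 2) (htwo : 2 * x = 2 * y) : x = y := by
  have h : (x - y) ^ 2 = 0 := by linear_combination hsq - y * htwo
  exact sub_eq_zero.mp (pow_eq_zero_iff two_ne_zero |>.mp h)

open Polynomial in
theorem IsAlgClosed.exists_sq_sub_mul_add_eq_zero {F : Type*} [Field F] [IsAlgClosed F]
    (b c : F) : ∃ x, x ^ 2 - b * x + c = 0 := by
  have hdeg : (X ^ 2 - C b * X + C c : F[X]).degree = 2 := by compute_degree!
  obtain ⟨x, hx⟩ := IsAlgClosed.exists_root (X ^ 2 - C b * X + C c) (by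
    rw [hdeg]
    exact two_ne_zero)
  exact ⟨x, by simpa using hx⟩

theorem polarMap_comp {K L F : Type*} [CommRing K] [CommRing L] [CommRing F] (q : K → L)
    (ι : L →+* F) (a b : K) : polarMap (ι ∘ q) a b = ι (polarMap q a b) := by
  simp [polarMap]

structure IsMulQuadratic {K L : Type*} [CommRing K] [CommRing L] (q : K → L) : Prop where
  map_mul : ∀ a b : K, q (a * b) = q a * q b
  map_intCast : ∀ n : ℤ, q (n : K) = ((n ^ 2 : ℤ) : L)
  polarMap_add_left : ∀ a b c : K, polarMap q (a + b) c = polarMap q a c + polarMap q b c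

namespace IsMulQuadratic

section Identities

variable {K L : Type*} [CommRing K] [CommRing L]

def trace (q : K → L) (a : K) : L := polarMap q a 1

def disc (q : K → L) (a : K) : L := trace q a ^ 2 - 4 * q a

variable {q : K → L} (hq : IsMulQuadratic q)
include hq

theorem map_one : q 1 = 1 := by
  simpa using hq.map_intCast 1

theorem map_two : q 2 = 4 := by
  have h := hq.map_intCast 2
  norm_num at h
  exact h

theorem polarMap_add_right (a b c : K) :
    polarMap q a (b + c) = polarMap q a b + polarMap q a c := by
  rw [polarMap_comm, hq.polarMap_add_left, polarMap_comm q b, polarMap_comm q c]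

theorem polarMap_mul_mul (a b c : K) : polarMap q (a * c) (b * c) = polarMap q a b * q c := by
  simp only [polarMap, ← add_mul, hq.map_mul]
  ring

theorem polarMap_self (a : K) : polarMap q a a = 2 * q a := by
  rw [polarMap, ← two_mul, hq.map_mul, hq.map_two]
  ring

theorem polarMap_mul_add_mul (a b c d : K) :
    polarMap q (a * c) (b * d) + polarMap q (a * d) (b * c) = polarMap q a b * polarMap q c d := by
  have h := hq.polarMap_mul_mul a b (c + d)
  rw [mul_add, mul_add, hq.polarMap_add_left, hq.polarMap_add_right, hq.polarMap_add_right,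
    hq.polarMap_mul_mul, hq.polarMap_mul_mul] at h
  simp only [polarMap] at h ⊢
  linear_combination h

theorem trace_add (a b : K) : trace q (a + b) = trace q a + trace q b :=
  hq.polarMap_add_left a b 1

theorem trace_one : trace q 1 = 2 := by
  rw [trace, polarMap, one_add_one_eq_two, hq.map_two, hq.map_one]
  norm_num

theorem trace_mul (a b : K) : trace q (a * b) = trace q a * trace q b - polarMap q a b := by
  have h := hq.polarMap_mul_add_mul a 1 b 1
  simp only [mul_one, one_mul] at h
  rw [trace, trace, trace]
  linear_combination h

theorem polarMap_mul_polarMap (a b o : K) :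
    polarMap q a o * polarMap q b o
      = trace q o * polarMap q (a * b) o + q o * (trace q a * trace q b - 2 * trace q (a * b)) := by
  have h₁ := hq.polarMap_mul_add_mul a o b o
  have h₂ := hq.polarMap_mul_add_mul (a * b) o o 1
  have h₃ := hq.polarMap_mul_mul (a * b) 1 o
  have h₄ := hq.trace_mul a b
  rw [mul_comm o b, hq.polarMap_mul_mul] at h₁
  rw [mul_one, mul_one] at h₂
  rw [one_mul] at h₃
  simp only [trace] at *
  linear_combination -h₁ + h₂ - h₃ + q o * h₄

theorem polarMap_mul_trace_add (a b o : K) :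
    polarMap q a o * trace q b + polarMap q b o * trace q a
      = 2 * polarMap q (a * b) o + trace q o * (trace q a * trace q b - trace q (a * b)) := by
  have h₁ := hq.polarMap_mul_add_mul a o b 1
  have h₂ := hq.polarMap_mul_add_mul b o a 1
  have h₃ := hq.polarMap_mul_add_mul a b o 1
  have h₄ := hq.trace_mul a b
  simp only [mul_one] at h₁ h₂ h₃
  rw [mul_comm o b] at h₁
  rw [mul_comm b a, polarMap_comm q b, mul_comm o a] at h₂
  simp only [trace] at *
  linear_combination polarMap q o 1 * h₄ + h₃ - h₁ - h₂

theorem polarMap_sq (a o : K) :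
    polarMap q a o ^ 2
      = trace q a * trace q o * polarMap q a o - trace q a ^ 2 * q o - trace q o ^ 2 * q a
        + 4 * q a * q o := by
  have h₁ := hq.polarMap_mul_polarMap a a o
  have h₂ := hq.polarMap_mul_add_mul a o a 1
  have h₃ := hq.polarMap_mul_mul 1 o a
  have h₄ := hq.trace_mul a a
  rw [hq.polarMap_self] at h₄
  rw [mul_one, mul_one] at h₂
  rw [one_mul, polarMap_comm q 1] at h₃
  simp only [trace] at *
  linear_combination h₁ + polarMap q o 1 * h₂ - polarMap q o 1 * h₃ - 2 * q o * h₄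

end Identities

theorem comp {K L F : Type*} [CommRing K] [CommRing L] [CommRing F] {q : K → L}
    (hq : IsMulQuadratic q) (ι : L →+* F) : IsMulQuadratic (ι ∘ q) where
  map_mul a b := by simp [hq.map_mul]
  map_intCast n := by simp [hq.map_intCast]
  polarMap_add_left a b c := by simp only [polarMap_comp, hq.polarMap_add_left, map_add]

section Embeddings

variable {K F : Type*} [CommRing K] [Field F] {q : K → F} (hq : IsMulQuadratic q)
include hq

theorem exists_ringHom_of_root {o : K} {ρ : F} (hρ : ρ ^ 2 - trace q o * ρ + q o = 0)
    (hδ : trace q o - 2 * ρ ≠ 0) :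
    ∃ φ : K →+* F, ∀ a, φ a * (trace q o - 2 * ρ) = polarMap q a o - trace q a * ρ := by
  let φ : K →* F :=
    { toFun a := (polarMap q a o - trace q a * ρ) / (trace q o - 2 * ρ)
      map_one' := by
        rw [polarMap_comm, ← trace, hq.trace_one]
        exact div_self hδ
      map_mul' a b := by
        have h₁ := hq.polarMap_mul_polarMap a b o
        have h₂ := hq.polarMap_mul_trace_add a b o
        rw [div_mul_div_comm, div_eq_div_iff hδ (mul_ne_zero hδ hδ)]
        linear_combination (2 * ρ - trace q o) *
          (h₁ - ρ * h₂ + (trace q a * trace q b - 2 * trace q (a * b)) * hρ) }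
  refine ⟨RingHom.mk' φ fun a b => ?_, fun a => div_mul_cancel₀ _ hδ⟩
  simp only [φ, MonoidHom.coe_mk, OneHom.coe_mk, hq.polarMap_add_left, hq.trace_add]
  ring

theorem exists_ringHom_mul_eq_of_disc_ne_zero [IsAlgClosed F] {o : K} (ho : disc q o ≠ 0) :
    ∃ φ₁ φ₂ : K →+* F, ∀ a, q a = φ₁ a * φ₂ a := by
  obtain ⟨ρ, hρ⟩ := IsAlgClosed.exists_sq_sub_mul_add_eq_zero (trace q o) (q o)
  have hδ : (trace q o - 2 * ρ) ^ 2 = disc q o := by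
    rw [disc]
    linear_combination 4 * hρ
  have hδ0 : trace q o - 2 * ρ ≠ 0 := fun h => ho (by rw [← hδ, h, zero_pow two_ne_zero])
  obtain ⟨φ₁, h₁⟩ := hq.exists_ringHom_of_root hρ hδ0
  obtain ⟨φ₂, h₂⟩ := hq.exists_ringHom_of_root (ρ := trace q o - ρ) (by linear_combination hρ)
    (by contrapose! hδ0; linear_combination -hδ0)
  refine ⟨φ₁, φ₂, fun a => mul_right_cancel₀ (pow_ne_zero 2 hδ0) ?_⟩
  linear_combination (trace q o - 2 * (trace q o - ρ)) * φ₂ a * h₁ a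
    + (polarMap q a o - trace q a * ρ) * h₂ a + hq.polarMap_sq a o
    + (4 * q a - trace q a ^ 2) * hρ

theorem exists_ringHom_of_sq_eq {r : K → F} (hsq : ∀ a, r a ^ 2 = q a)
    (htr : ∀ a, 2 * r a = trace q a) : ∃ φ : K →+* F, ⇑φ = r := by
  have hadd (a b : K) : 2 * r (a + b) = 2 * (r a + r b) := by
    rw [htr, hq.trace_add, mul_add, htr, htr]
  have hpolar (a b : K) : polarMap q a b = 2 * (r a * r b) := by
    have hfour : 4 * (polarMap q a b - 2 * (r a * r b)) = 0 := by
      rw [polarMap]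
      linear_combination 4 * hsq a + 4 * hsq b - 4 * hsq (a + b)
        + (2 * r (a + b) + 2 * (r a + r b)) * hadd a b
    have heven : polarMap q a b - 2 * (r a * r b) = 2 * (r a * r b - r (a * b)) := by
      linear_combination hq.trace_mul a b + htr (a * b) - 2 * r b * htr a - trace q a * htr b
    -- `hfour` settles characteristic `≠ 2`, `heven` characteristic `2`.
    rcases eq_or_ne (2 : F) 0 with h2 | h2
    · rw [← sub_eq_zero, heven, h2, zero_mul]
    · have h4 : (4 : F) ≠ 0 := by
        rw [show (4 : F) = 2 * 2 by norm_num]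
        exact mul_ne_zero h2 h2
      exact sub_eq_zero.mp ((mul_eq_zero.mp hfour).resolve_left h4)
  let φ : K →* F :=
    { toFun := r
      map_one' := eq_of_sq_eq_of_two_mul_eq (by rw [hsq, hq.map_one, one_pow])
        (by rw [htr, hq.trace_one, mul_one])
      map_mul' a b := eq_of_sq_eq_of_two_mul_eq (by rw [hsq, hq.map_mul, mul_pow, hsq, hsq])
        (by linear_combination hq.trace_mul a b + htr (a * b) - 2 * r b * htr a
              - trace q a * htr b - hpolar a b) }
  refine ⟨RingHom.mk' φ fun a b => eq_of_sq_eq_of_two_mul_eq ?_ (hadd a b), rfl⟩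
  have h := hpolar a b
  rw [polarMap] at h
  linear_combination hsq (a + b) - hsq a - hsq b + h

theorem exists_ringHom_mul_self_eq_of_disc_eq_zero [IsAlgClosed F] (hD : ∀ a, disc q a = 0) :
    ∃ φ : K →+* F, ∀ a, q a = φ a * φ a := by
  choose r hr using fun a => IsAlgClosed.exists_sq_sub_mul_add_eq_zero (trace q a) (q a)
  have htr (a : K) : 2 * r a = trace q a := by
    have h : (2 * r a - trace q a) ^ 2 = 0 := by
      have := hD a
      rw [disc] at this
      linear_combination 4 * hr a + this
    exact sub_eq_zero.mp (pow_eq_zero_iff two_ne_zero |>.mp h)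
  have hsq (a : K) : r a ^ 2 = q a := by linear_combination r a * htr a - hr a
  obtain ⟨φ, rfl⟩ := hq.exists_ringHom_of_sq_eq hsq htr
  exact ⟨φ, fun a => by rw [← hsq, sq]⟩

theorem exists_ringHom_mul_eq [IsAlgClosed F] : ∃ φ₁ φ₂ : K →+* F, ∀ a, q a = φ₁ a * φ₂ a := by
  by_cases hD : ∀ a, disc q a = 0
  · obtain ⟨φ, hφ⟩ := hq.exists_ringHom_mul_self_eq_of_disc_eq_zero hD
    exact ⟨φ, φ, hφ⟩
  · push Not at hD
    obtain ⟨o, ho⟩ := hD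
    exact hq.exists_ringHom_mul_eq_of_disc_ne_zero ho

end Embeddings

end IsMulQuadratic

theorem stmt_11_general {K L : Type*} [Field K] [Field L] (q : K → L)
    (hmul : ∀ a b : K, q (a * b) = q a * q b)
    (hint : ∀ n : ℤ, q ((n : K)) = ((n ^ 2 : ℤ) : L))
    (hbil_left : ∀ a b c : K, polarMap q (a + b) c = polarMap q a c + polarMap q b c) :
    ∃ φ₁ φ₂ : K →+* AlgebraicClosure L,
      ∀ a : K, algebraMap L (AlgebraicClosure L) (q a) = φ₁ a * φ₂ a :=
  (IsMulQuadratic.mk hmul hint hbil_left).comp (algebraMap L _) |>.exists_ringHom_mul_eq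

theorem stmt_11 {K L : Type*} [Field K] [Field L] (q : K → L)
    (hmul : ∀ a b : K, q (a * b) = q a * q b)
    (hint : ∀ n : ℤ, q ((n : K)) = ((n ^ 2 : ℤ) : L))
    (hbil_left : ∀ a b c : K, polarMap q (a + b) c = polarMap q a c + polarMap q b c)
    (hbil_right : ∀ a b c : K, polarMap q a (b + c) = polarMap q a b + polarMap q a c) :
    ∃ φ₁ φ₂ : K →+* AlgebraicClosure L,
      ∀ a : K, algebraMap L (AlgebraicClosure L) (q a) = φ₁ a * φ₂ a :=
  stmt_11_general q hmul hint hbil_left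
end

section
/- Let K and L be fields and σ₁,…,σₙ : K → L field monomorphisms. If the full polarization Σ_{g ∈ Sₙ} Π_{i=1}^n σ_{g(i)}(x_i) vanishes for all x₁,…,xₙ ∈ K, then char K = p > 0 and p of the σᵢ coincide, i.e. there exist indices i₁ < i₂ < … < i_p with σ_{i₁} = σ_{i₂} = … = σ_{i_p}. -/
open Finset

theorem stmt_12 {K L : Type*} [Field K] [Field L] (n : ℕ) (σ : Fin n → (K →+* L))
    (hvanish : ∀ x : Fin n → K,
      ∑ g : Equiv.Perm (Fin n), ∏ i : Fin n, σ (g i) (x i) = 0) :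
    ∃ p : ℕ, p.Prime ∧ CharP K p ∧
      ∃ s : Finset (Fin n), s.card = p ∧ ∀ i ∈ s, ∀ j ∈ s, σ i = σ j := by
  classical
  -- characters
  let χ : (Fin n → (K →+* L)) → ((Fin n → K) →* L) := fun f =>
    { toFun := fun x => ∏ i, f i (x i)
      map_one' := by simp
      map_mul' := fun x y => by simp [Finset.prod_mul_distrib] }
  have hχ_inj : Function.Injective χ := by
    intro f f' h
    funext i
    ext t
    have h1 := congrArg (fun φ : (Fin n → K) →* L => φ (Function.update (1 : Fin n → K) i t)) h
    simp only [χ, MonoidHom.coe_mk, OneHom.coe_mk] at h1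
    have e : ∀ (f : Fin n → (K →+* L)), ∏ j, f j (Function.update (1 : Fin n → K) i t j) = f i t := by
      intro f
      rw [Finset.prod_eq_single i]
      · simp
      · intro j _ hj; simp [Function.update_of_ne hj]
      · simp
    rwa [e, e] at h1
  set S : Finset (Fin n → (K →+* L)) :=
    Finset.univ.image (fun g : Equiv.Perm (Fin n) => σ ∘ g) with hS
  set N : (Fin n → (K →+* L)) → ℕ := fun f =>
    (Finset.univ.filter (fun g : Equiv.Perm (Fin n) => σ ∘ g = f)).card with hN
  have key : ∀ x : Fin n → K, ∑ f ∈ S, (N f : L) * χ f x = 0 := by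
    intro x
    have := Finset.sum_fiberwise_of_maps_to (g := fun g : Equiv.Perm (Fin n) => σ ∘ g)
      (s := Finset.univ) (t := S)
      (fun g _ => Finset.mem_image_of_mem _ (Finset.mem_univ g))
      (fun g => ∏ i, σ (g i) (x i))
    rw [← hvanish x, ← this]
    refine Finset.sum_congr rfl fun f hf => ?_
    have he : ∀ g ∈ Finset.univ.filter (fun g : Equiv.Perm (Fin n) => σ ∘ g = f),
        (∏ i, σ (g i) (x i)) = χ f x := by
      intro g hg
      have hg' : σ ∘ g = f := (Finset.mem_filter.mp hg).2
      show (∏ i, σ (g i) (x i)) = ∏ i, f i (x i)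
      exact Finset.prod_congr rfl fun i _ => by rw [← hg']; rfl
    rw [Finset.sum_congr rfl he, Finset.sum_const, nsmul_eq_mul]
  -- linear independence of characters
  have hli : LinearIndependent L (fun f : S => ⇑(χ f.1)) :=
    (linearIndependent_monoidHom (Fin n → K) L).comp (fun f : S => χ f.1)
      (fun a b hab => Subtype.ext (hχ_inj hab))
  have hzero : ∀ f : S, (N f.1 : L) = 0 := by
    apply Fintype.linearIndependent_iff.mp hli (fun f : S => (N f.1 : L))
    funext x
    have := key x
    simp only [Pi.zero_apply, Finset.sum_apply, Pi.smul_apply, smul_eq_mul]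
    rw [← Finset.sum_attach S (fun f => (N f : L) * χ f x)] at this
    exact this
  have hσS : σ ∈ S := by
    refine Finset.mem_image.mpr ⟨1, Finset.mem_univ _, ?_⟩
    funext i; rfl
  have hNσ : (N σ : L) = 0 := hzero ⟨σ, hσS⟩
  have hNσ_pos : 0 < N σ := Finset.card_pos.mpr ⟨1, Finset.mem_filter.mpr ⟨Finset.mem_univ _, by funext i; rfl⟩⟩
  set p := ringChar L with hp
  haveI : CharP L p := ringChar.charP L
  have hdvd : p ∣ N σ := (CharP.cast_eq_zero_iff L p (N σ)).mp hNσ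
  have hp_ne : p ≠ 0 := by
    rintro h0
    rw [h0] at hdvd
    exact hNσ_pos.ne' (zero_dvd_iff.mp hdvd)
  have hp_prime : p.Prime := (CharP.char_is_prime_or_zero L p).resolve_right hp_ne
  -- compute N σ as product of factorials
  have hcard : N σ = Fintype.card {g : Equiv.Perm (Fin n) // σ ∘ g = σ} :=
    (Fintype.card_subtype _).symm
  have hfact := DomMulAct.stabilizer_card' σ
  rw [hcard, hfact] at hdvd
  obtain ⟨c, hcmem, hc⟩ := (Nat.Prime.prime hp_prime).exists_mem_finset_dvd hdvd
  have hple : p ≤ Fintype.card {i // σ i = c} :=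
    (Nat.Prime.dvd_factorial hp_prime).mp hc
  rw [Fintype.card_subtype] at hple
  obtain ⟨s, hs_sub, hs_card⟩ :=
    Finset.exists_subset_card_eq hple
  have hs_eq : ∀ i ∈ s, σ i = c := fun i hi => (Finset.mem_filter.mp (hs_sub hi)).2
  have hs_ne : s.Nonempty := Finset.card_pos.mp (by rw [hs_card]; exact hp_prime.pos)
  obtain ⟨i0, hi0⟩ := hs_ne
  haveI : CharP K p := (σ i0).charP (σ i0).injective p
  exact ⟨p, hp_prime, ‹CharP K p›, s, hs_card, fun i hi j hj => by rw [hs_eq i hi, hs_eq j hj]⟩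
end

section
/- Let K and L be fields, n ≥ m ≥ 1, and σ₁,…,σₙ, τ₁,…,τ_m : K → L field homomorphisms with Π_{i=1}^n σᵢ(a) = Π_{j=1}^m τⱼ(a) for all a ∈ K. If char K = 0, or char K = p and no p of the σᵢ are equal, then n = m and there is a permutation g ∈ Sₙ with τᵢ = σ_{g(i)} for all i. -/
/-!
Let `S`, `T` be the multisets of the `σᵢ` and `τⱼ`, and `χ_S = prodHom S : a ↦ ∏_{ρ ∈ S} ρ a`.
Expanding `χ_S (a + b) = ∏ (ρ a + ρ b)` writes it as the sum over `W ≤ S` of the characters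
`(a, b) ↦ χ_{S - W} a * χ_W b` of `K × K`, and Dedekind's independence of characters compares
multiplicities in `L`, which is faithful while they stay below the characteristic.

By induction on `|U|`, `χ_U` is a ring hom `ρ` only for `U = {ρ}`: otherwise, for `ρ₀ ∈ U`, the
character `(a, b) ↦ χ_{U - ρ₀} a * ρ₀ b` occurs `count ρ₀ U` times in the expansion of
`χ_U (a + b)` but not in `ρ a + ρ b`. Hence in `χ_S (1 + t) = ∑_{W ≤ S} χ_W t` the character `ρ`
occurs exactly `count ρ S` times, so `χ_S` determines `S`. Finally, if some `ρ` occurs at least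
`p = char K` times in `T`, replacing `p` copies of `ρ` by `ρ ∘ Frob` keeps `χ_T` and shortens `T`,
which contradicts `|T| ≤ |S|` by induction.
-/

open Multiset

namespace Multiset

variable {α β : Type*} [DecidableEq α]

theorem count_map_eq_count_of_fiber [DecidableEq β] {f : α → β} {s : Multiset α} {x : α}
    (h : ∀ y ∈ s, f y = f x → y = x) : count (f x) (s.map f) = count x s := by
  rw [count_map, ← countP_eq_card_filter, count]
  exact countP_congr rfl fun y hy => propext ⟨fun hxy => (h y hy hxy.symm).symm, congrArg f⟩

theorem count_zero_powerset (s : Multiset α) : count 0 (powerset s) = 1 := by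
  induction s using Multiset.induction_on with
  | empty => simp
  | cons a s ih => simp [powerset_cons, ih]

theorem count_singleton_powerset (a : α) (s : Multiset α) :
    count {a} (powerset s) = count a s := by
  induction s using Multiset.induction_on with
  | empty => simp
  | cons b s ih =>
    rw [powerset_cons, count_add, ih]
    by_cases hab : a = b
    · subst hab
      rw [← cons_zero, count_map_eq_count' _ _ fun _ _ => (cons_inj_right a).1]
      simp [count_zero_powerset]
    · simp [count_map, hab]

end Multiset

theorem MonoidHom.natCast_count_eq_of_sum_apply_eq {M L : Type*} [MulOneClass M] [CommRing L]
    [IsDomain L] [DecidableEq (M →* L)] {Q₁ Q₂ : Multiset (M →* L)}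
    (h : ∀ x, (Q₁.map (· x)).sum = (Q₂.map (· x)).sum) (χ : M →* L) :
    (Q₁.count χ : L) = Q₂.count χ := by
  let c (Q : Multiset (M →* L)) : (M →* L) →₀ L :=
    Finsupp.mapRange Nat.cast Nat.cast_zero (Multiset.toFinsupp Q)
  have hc : ∀ Q, Finsupp.linearCombination L (fun f : M →* L => (f : M → L)) (c Q) =
      fun x => (Q.map (· x)).sum := by
    intro Q
    ext x
    rw [Finsupp.linearCombination_apply, Finsupp.sum_mapRange_index (by simp),
      Finset.sum_multiset_map_count]
    simp [Finsupp.sum, nsmul_eq_mul]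
  have := linearIndependent_monoidHom M L (a₁ := c Q₁) (a₂ := c Q₂)
    (by rw [hc, hc]; exact funext h)
  simpa [c] using DFunLike.congr_fun this χ

theorem Nat.eq_of_cast_eq_of_lt_char {R : Type*} [NonAssocRing R] [NoZeroDivisors R]
    [Nontrivial R] {c d : ℕ} (hc : ∀ p, p.Prime → CharP R p → c < p)
    (hd : ∀ p, p.Prime → CharP R p → d < p) (h : (c : R) = d) : c = d := by
  rcases CharP.char_is_prime_or_zero R (ringChar R) with hp | h0
  · exact Nat.ModEq.eq_of_lt_of_lt ((CharP.natCast_eq_natCast R (ringChar R)).1 h)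
      (hc _ hp inferInstance) (hd _ hp inferInstance)
  · have : CharP R 0 := h0 ▸ inferInstance
    have := CharP.charP_to_charZero R
    exact Nat.cast_injective h

theorem exists_equiv_of_map_univ_eq {α β γ : Type*} [Fintype α] [Fintype β] [DecidableEq γ]
    {f : α → γ} {g : β → γ} (h : Finset.univ.val.map f = Finset.univ.val.map g) :
    ∃ e : α ≃ β, ∀ a, g (e a) = f a := by
  have hfib : ∀ c, Fintype.card {a // f a = c} = Fintype.card {b // g b = c} := by
    intro c
    have := congrArg (count c) h
    simp only [count_map, @eq_comm _ c] at this
    simpa only [Fintype.card_subtype, Finset.card_def, Finset.filter_val] using this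
  exact ⟨Equiv.ofFiberEquiv fun c => Fintype.equivOfCardEq (hfib c),
    Equiv.ofFiberEquiv_map _⟩

section prodHom

variable {K L : Type*} [Semiring K] [CommSemiring L]

def prodHom (S : Multiset (K →+* L)) : K →* L where
  toFun a := (S.map (· a)).prod
  map_one' := by simp
  map_mul' a b := by simp [prod_map_mul]

theorem prodHom_apply (S : Multiset (K →+* L)) (a : K) : prodHom S a = (S.map (· a)).prod := rfl

theorem prodHom_zero : prodHom (0 : Multiset (K →+* L)) = 1 := by
  ext; simp [prodHom_apply]

@[simp]
theorem prodHom_singleton (ρ : K →+* L) : prodHom {ρ} = (ρ : K →* L) := by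
  ext; simp [prodHom_apply]

theorem prodHom_add (S T : Multiset (K →+* L)) : prodHom (S + T) = prodHom S * prodHom T := by
  ext; simp [prodHom_apply]

theorem prodHom_apply_zero {S : Multiset (K →+* L)} (hS : S ≠ 0) : prodHom S 0 = 0 := by
  obtain ⟨ρ, hρ⟩ := exists_mem_of_ne_zero hS
  exact prod_eq_zero (mem_map.2 ⟨ρ, hρ, map_zero ρ⟩)

theorem prodHom_apply_add [DecidableEq (K →+* L)] (S : Multiset (K →+* L)) (a b : K) :
    prodHom S (a + b) = ((powerset S).map fun W => prodHom (S - W) a * prodHom W b).sum := by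
  simp [prodHom_apply, prod_map_add, antidiagonal_eq_map_powerset, map_map]

def prodHomPair (U V : Multiset (K →+* L)) : K × K →* L :=
  (prodHom U).comp (MonoidHom.fst K K) * (prodHom V).comp (MonoidHom.snd K K)

@[simp]
theorem prodHomPair_apply (U V : Multiset (K →+* L)) (x : K × K) :
    prodHomPair U V x = prodHom U x.1 * prodHom V x.2 := rfl

theorem prodHomPair_ne_comp_fst [Nontrivial L] (U : Multiset (K →+* L)) {V : Multiset (K →+* L)}
    (hV : V ≠ 0) (ρ : K →+* L) : prodHomPair U V ≠ (ρ : K →* L).comp (MonoidHom.fst K K) := by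
  intro h
  simpa [prodHom_apply_zero hV] using DFunLike.congr_fun h (1, 0)

theorem prodHomPair_ne_comp_snd [Nontrivial L] {U : Multiset (K →+* L)} (hU : U ≠ 0)
    (V : Multiset (K →+* L)) (ρ : K →+* L) :
    prodHomPair U V ≠ (ρ : K →* L).comp (MonoidHom.snd K K) := by
  intro h
  simpa [prodHom_apply_zero hU] using DFunLike.congr_fun h (0, 1)

end prodHom

section Field

variable {K L : Type*} [Field K] [Field L]

theorem prodHom_replicate (p : ℕ) [ExpChar K p] (ρ : K →+* L) :
    prodHom (replicate p ρ) = prodHom {ρ.comp (frobenius K p)} := by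
  ext a
  simp [prodHom_apply, frobenius_def]

variable [DecidableEq (K →+* L)]

def CountLtChar (S : Multiset (K →+* L)) : Prop :=
  ∀ p : ℕ, p.Prime → CharP K p → ∀ ρ : K →+* L, S.count ρ < p

theorem CountLtChar.mono {S T : Multiset (K →+* L)} (hT : CountLtChar T) (h : S ≤ T) :
    CountLtChar S :=
  fun p hp hK ρ => (count_le_of_le ρ h).trans_lt (hT p hp hK ρ)

theorem countLtChar_zero : CountLtChar (0 : Multiset (K →+* L)) :=
  fun _ hp _ _ => hp.pos

theorem CountLtChar.count_eq_of_natCast_eq {S T : Multiset (K →+* L)} (hS : CountLtChar S)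
    (hT : CountLtChar T) {ρ : K →+* L} (h : (S.count ρ : L) = T.count ρ) :
    S.count ρ = T.count ρ :=
  Nat.eq_of_cast_eq_of_lt_char (fun p hp hK => hS p hp hK ρ) (fun p hp hK => hT p hp hK ρ)
    (ρ.injective (by simpa using h))

theorem eq_singleton_of_prodHom_eq {U : Multiset (K →+* L)} (hU : CountLtChar U) {ρ : K →+* L}
    (h : prodHom U = ρ) : U = {ρ} := by
  classical
  induction hN : card U using Nat.strong_induction_on generalizing U ρ with
  | _ N ih =>
  rcases Nat.lt_or_ge N 2 with hlt | hge
  · interval_cases N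
    · have := DFunLike.congr_fun h 0
      simp [card_eq_zero.1 hN, prodHom_zero] at this
    · obtain ⟨ρ', rfl⟩ := card_eq_one.1 hN
      rw [prodHom_singleton] at h
      exact congrArg _ (RingHom.coe_monoidHom_injective h)
  exfalso
  obtain ⟨ρ₀, hρ₀⟩ := exists_mem_of_ne_zero (card_pos.1 (by omega : 0 < card U))
  have hrest : U - {ρ₀} ≠ 0 := by
    intro h0
    have := card_le_card (tsub_eq_zero_iff_le.1 h0)
    rw [card_singleton] at this
    omega
  have hsum : ∀ x : K × K, (((powerset U).map fun W => prodHomPair (U - W) W).map (· x)).sum =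
      (({(ρ : K →* L).comp (MonoidHom.fst K K), (ρ : K →* L).comp (MonoidHom.snd K K)} :
        Multiset (K × K →* L)).map (· x)).sum := by
    rintro ⟨a, b⟩
    have := prodHom_apply_add U a b
    rw [h] at this
    simpa [map_map, Function.comp_def] using this.symm
  have hfiber : ∀ W ∈ powerset U,
      prodHomPair (U - W) W = prodHomPair (U - {ρ₀}) {ρ₀} → W = {ρ₀} := by
    intro W hW hWρ₀
    have hWU := mem_powerset.1 hW
    have hW : prodHom W = ρ₀ := by
      ext b
      simpa using DFunLike.congr_fun hWρ₀ (1, b)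
    have hcompl : U - W ≠ 0 := by
      intro h0
      have := DFunLike.congr_fun hWρ₀ (0, 1)
      rw [prodHomPair_apply, prodHomPair_apply, h0, prodHom_apply_zero hrest, prodHom_zero] at this
      simp at this
    have hcard : card W < N :=
      hN ▸ card_lt_card (lt_of_le_of_ne hWU (by rintro rfl; simp at hcompl))
    exact ih _ hcard (hU.mono hWU) hW rfl
  have hχ₀ : prodHomPair (U - {ρ₀}) {ρ₀} ∉ ({(ρ : K →* L).comp (MonoidHom.fst K K),
      (ρ : K →* L).comp (MonoidHom.snd K K)} : Multiset (K × K →* L)) := by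
    simp only [insert_eq_cons, mem_cons, mem_singleton, not_or]
    exact ⟨prodHomPair_ne_comp_fst _ (singleton_ne_zero ρ₀) ρ, prodHomPair_ne_comp_snd hrest _ ρ⟩
  have hcount := MonoidHom.natCast_count_eq_of_sum_apply_eq hsum (prodHomPair (U - {ρ₀}) {ρ₀})
  rw [count_map_eq_count_of_fiber hfiber, count_singleton_powerset, count_eq_zero.2 hχ₀] at hcount
  exact count_ne_zero.2 hρ₀ (hU.count_eq_of_natCast_eq countLtChar_zero (by simpa using hcount))

theorem count_map_prodHom_powerset [DecidableEq (K →* L)] {R : Multiset (K →+* L)}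
    (hR : CountLtChar R) (ρ : K →+* L) :
    ((powerset R).map prodHom).count (ρ : K →* L) = R.count ρ := by
  classical
  rw [← prodHom_singleton, count_map_eq_count_of_fiber, count_singleton_powerset]
  intro W hW hWρ
  exact eq_singleton_of_prodHom_eq (hR.mono (mem_powerset.1 hW)) (hWρ.trans (prodHom_singleton ρ))

theorem eq_of_prodHom_eq_of_countLtChar {S T : Multiset (K →+* L)} (hS : CountLtChar S)
    (hT : CountLtChar T) (h : prodHom S = prodHom T) : S = T := by
  classical
  ext ρ
  have hsum : ∀ t, (((powerset S).map prodHom).map (· t)).sum =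
      (((powerset T).map prodHom).map (· t)).sum := by
    intro t
    have := congrArg (· (1 + t)) h
    simpa [prodHom_apply_add, map_map, Function.comp_def] using this
  have hcount := MonoidHom.natCast_count_eq_of_sum_apply_eq hsum ρ
  rw [count_map_prodHom_powerset hS, count_map_prodHom_powerset hT] at hcount
  exact hS.count_eq_of_natCast_eq hT hcount

theorem eq_of_prodHom_eq {S T : Multiset (K →+* L)} (hS : CountLtChar S)
    (hcard : card T ≤ card S) (h : prodHom S = prodHom T) : S = T := by
  induction hN : card T using Nat.strong_induction_on generalizing T with
  | _ N ih =>
  by_cases hT : CountLtChar T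
  · exact eq_of_prodHom_eq_of_countLtChar hS hT h
  exfalso
  simp only [CountLtChar, not_forall, not_lt] at hT
  obtain ⟨p, hp, hK, ρ, hρ⟩ := hT
  have : Fact p.Prime := ⟨hp⟩
  have hp2 := hp.two_le
  have hle : replicate p ρ ≤ T := le_count_iff_replicate_le.1 hρ
  set T' := T - replicate p ρ + {ρ.comp (frobenius K p)}
  have hT' : prodHom T' = prodHom T := by
    rw [prodHom_add, ← prodHom_replicate, ← prodHom_add, tsub_add_cancel_of_le hle]
  have hcardT : card T' + (p - 1) = card T := by
    have := card_le_card hle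
    rw [card_add, card_sub hle, card_singleton]
    rw [card_replicate] at this ⊢
    omega
  have hST' := ih (card T') (by omega) (by omega) (h.trans hT'.symm) rfl
  subst hST'
  omega

end Field

theorem stmt_13_general {K L : Type*} [Field K] [Field L] (n m : ℕ)
    (hnm : m ≤ n)
    (σ : Fin n → (K →+* L)) (τ : Fin m → (K →+* L))
    (heq : ∀ a : K, ∏ i : Fin n, σ i a = ∏ j : Fin m, τ j a)
    (hchar : ∀ p : ℕ, p.Prime → CharP K p →
      ¬ ∃ s : Finset (Fin n), s.card = p ∧ ∀ i ∈ s, ∀ j ∈ s, σ i = σ j) :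
    n = m ∧ ∃ e : Fin m ≃ Fin n, ∀ i : Fin m, τ i = σ (e i) := by
  classical
  have hS : CountLtChar (Finset.univ.val.map σ) := by
    intro p hp hK ρ
    by_contra! hle
    rw [count_map, ← Finset.filter_val, Finset.card_val] at hle
    obtain ⟨s, hs, hcard⟩ := Finset.exists_subset_card_eq hle
    refine hchar p hp hK ⟨s, hcard, fun i hi j hj => ?_⟩
    rw [← (Finset.mem_filter.1 (hs hi)).2, ← (Finset.mem_filter.1 (hs hj)).2]
  have hST : Finset.univ.val.map σ = Finset.univ.val.map τ :=
    eq_of_prodHom_eq hS (by simpa using hnm) <| by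
      ext a
      rw [prodHom_apply, prodHom_apply, map_map, map_map]
      exact heq a
  obtain ⟨e, he⟩ := exists_equiv_of_map_univ_eq hST.symm
  exact ⟨by simpa using congrArg card hST, e, fun i => (he i).symm⟩

theorem stmt_13 {K L : Type*} [Field K] [Field L] (n m : ℕ)
    (hnm : m ≤ n) (hm : 1 ≤ m)
    (σ : Fin n → (K →+* L)) (τ : Fin m → (K →+* L))
    (heq : ∀ a : K, ∏ i : Fin n, σ i a = ∏ j : Fin m, τ j a)
    (hchar : ∀ p : ℕ, p.Prime → CharP K p →
      ¬ ∃ s : Finset (Fin n), s.card = p ∧ ∀ i ∈ s, ∀ j ∈ s, σ i = σ j) :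
    n = m ∧ ∃ e : Fin m ≃ Fin n, ∀ i : Fin m, τ i = σ (e i) :=
  stmt_13_general n m hnm σ τ heq hchar
end

section
/- Let K and L be fields of characteristic p > 0 with Frobenius endomorphism 𝐩 on L, and suppose σ₁,…,σₙ, τ₁,…,τ_m : K → L (n ≥ m ≥ 1) are field homomorphisms with Π_{i=1}^n σᵢ(a) = Π_{j=1}^m τⱼ(a) for all a ∈ K, and some p of the σᵢ coincide. Then for every j with 1 ≤ j ≤ m there exist an integer l with −(m−1) ≤ l(p−1) ≤ n−1 and an index i with τⱼ = 𝐩^l ∘ σᵢ; and for every i there exist an integer l with −(n−1) ≤ l(p−1) ≤ m−1 and an index j with σᵢ = 𝐩^l ∘ τⱼ. -/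
/-!
Dedekind's independence of characters, applied to the characters `x ↦ ∏ i, σ i (x (f i))` of
the monoid `κ → K` (one for each map `f`), turns `∏ σ i = ∏ τ j` into a congruence mod `p`
between the number of maps `f` with `∏_{f i = u} σ i = τ u` for all `u` and the number of
permutations of `κ` fixing `τ`, which is a product of factorials of fibre sizes. So either the
`σ i` group into products equal to the `τ j`, or `p` of the `τ j` coincide and merge into one
Frobenius twist. Iterating this on relations `∏ σ i ^ p ^ c i = ∏ τ j ^ p ^ d j` ends with a
single factor on each side, `τ j ^ p ^ s = σ i ^ p ^ t`, and the weights of the two products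
bound `(t - s) (p - 1)` from both sides.
-/

open Finset

theorem natCast_card_filter_eq_of_sum_eq {M L : Type*} [Monoid M] [CommRing L] [IsDomain L]
    [DecidableEq (M →* L)] {ι κ : Type*} [Fintype ι] [Fintype κ] {A : ι → M →* L}
    {B : κ → M →* L} (h : ∀ x, ∑ i, A i x = ∑ j, B j x) (θ : M →* L) :
    ((#{i | A i = θ} : ℕ) : L) = #{j | B j = θ} := by
  set c : (M →* L) →₀ L := ∑ i, Finsupp.single (A i) 1 - ∑ j, Finsupp.single (B j) 1
  have hc : Finsupp.linearCombination L (fun f : M →* L => (f : M → L)) c = 0 := by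
    ext x
    simp [c, map_sum, h]
  have := congr($(linearIndependent_iff.1 (linearIndependent_monoidHom M L) c hc) θ)
  simpa [c, Finsupp.single_apply, eq_comm (a := θ), sub_eq_zero] using this

section FiberProducts

variable {K L ι κ : Type*} [Field K] [Field L]

def prodEval [Fintype ι] (φ : ι → K →+* L) (f : ι → κ) : (κ → K) →* L :=
  ∏ i, (φ i : K →* L).comp (Pi.evalMonoidHom (fun _ => K) (f i))

theorem prodEval_apply [Fintype ι] (φ : ι → K →+* L) (f : ι → κ) (x : κ → K) :
    prodEval φ f x = ∏ i, φ i (x (f i)) := by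
  simp [prodEval]

theorem sum_prodEval [Fintype ι] [DecidableEq ι] [Fintype κ] (φ : ι → K →+* L) (x : κ → K) :
    ∑ f : ι → κ, prodEval φ f x = ∏ i, φ i (∑ j, x j) := by
  simp [prodEval_apply, map_sum, Fintype.prod_sum]

theorem prodEval_update_one [Fintype ι] [DecidableEq κ] (φ : ι → K →+* L) (f : ι → κ) (u : κ)
    (a : K) : prodEval φ f (Function.update 1 u a) = ∏ i with f i = u, φ i a := by
  rw [prodEval_apply, prod_filter]
  refine prod_congr rfl fun i _ => ?_
  split_ifs with h <;> simp [h]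

theorem prodEval_id_update_one [Fintype κ] [DecidableEq κ] (ρ : κ → K →+* L) (u : κ) (a : K) :
    prodEval ρ id (Function.update 1 u a) = ρ u a := by
  simp [prodEval_update_one, filter_eq']

theorem prodEval_perm_eq_prodEval_id [Fintype κ] {ρ : κ → K →+* L} {π : Equiv.Perm κ}
    (hπ : ρ ∘ π = ρ) : prodEval ρ π = prodEval ρ id := by
  ext x
  rw [prodEval_apply, prodEval_apply, ← Equiv.prod_comp π (fun j => ρ j (x (id j)))]
  exact prod_congr rfl fun j _ => congr($(congr_fun hπ j) (x (π j))).symm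

theorem exists_perm_of_prodEval_eq_prodEval_id [Fintype κ] {ρ : κ → K →+* L} {g : κ → κ}
    (hg : prodEval ρ g = prodEval ρ id) : ∃ π : Equiv.Perm κ, ρ ∘ π = ρ ∧ ⇑π = g := by
  let _ : DecidableEq κ := Classical.decEq κ
  have hfib (u : κ) (a : K) : ∏ j with g j = u, ρ j a = ρ u a := by
    rw [← prodEval_update_one, hg, prodEval_id_update_one]
  have hsurj : Function.Surjective g := fun u => by
    by_contra! hu
    simpa [filter_eq_empty_iff.2 fun j _ => hu j] using hfib u 0
  have hbij : Function.Bijective g := ⟨Finite.injective_iff_surjective.2 hsurj, hsurj⟩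
  refine ⟨Equiv.ofBijective g hbij, funext fun j => RingHom.ext fun a => ?_, rfl⟩
  have : ({j' | g j' = g j} : Finset κ) = {j} := by
    ext j'
    simp [hbij.1.eq_iff]
  simpa [this] using (hfib (g j) a).symm

theorem natCard_prodEval_eq_prodEval_id [Fintype κ] (ρ : κ → K →+* L) :
    Nat.card {g : κ → κ // prodEval ρ g = prodEval ρ id} =
      Nat.card {π : Equiv.Perm κ // ρ ∘ π = ρ} := by
  refine (Nat.card_congr (Equiv.ofBijective (fun π => ⟨π.1, prodEval_perm_eq_prodEval_id π.2⟩)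
    ⟨fun π π' h => Subtype.ext (DFunLike.coe_injective (congrArg Subtype.val h)),
      fun g => ?_⟩)).symm
  obtain ⟨π, hπ, hg⟩ := exists_perm_of_prodEval_eq_prodEval_id g.2
  exact ⟨⟨π, hπ⟩, Subtype.ext hg⟩

variable {p : ℕ} [Fact p.Prime] [CharP L p]

theorem exists_fiber_prod_eq_or_card_eq_of_prod_eq [Fintype ι] [Fintype κ] [DecidableEq κ]
    (α : ι → K →+* L) (ρ : κ → K →+* L) (h : ∀ a, ∏ i, α i a = ∏ j, ρ j a) :
    (∃ f : ι → κ, ∀ u a, ∏ i with f i = u, α i a = ρ u a) ∨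
      ∃ C : Finset κ, #C = p ∧ ∀ j ∈ C, ∀ j' ∈ C, ρ j = ρ j' := by
  classical
  refine or_iff_not_imp_left.2 fun hpart => ?_
  have hsum (x : κ → K) : ∑ f, prodEval α f x = ∑ g, prodEval ρ g x := by
    rw [sum_prodEval, sum_prodEval, h]
  have hα : #{f | prodEval α f = prodEval ρ id} = 0 := by
    refine card_eq_zero.2 (filter_eq_empty_iff.2 fun f _ hf => hpart ⟨f, fun u a => ?_⟩)
    rw [← prodEval_update_one, hf, prodEval_id_update_one]
  have hdvd : p ∣ Fintype.card {π : Equiv.Perm κ // ρ ∘ π = ρ} := by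
    rw [← Nat.card_eq_fintype_card, ← natCard_prodEval_eq_prodEval_id, Nat.card_eq_fintype_card,
      Fintype.card_subtype, ← CharP.cast_eq_zero_iff L p, ← natCast_card_filter_eq_of_sum_eq hsum,
      hα, Nat.cast_zero]
  rw [DomMulAct.stabilizer_card', (Nat.Prime.prime Fact.out).dvd_finsetProd_iff] at hdvd
  obtain ⟨φ, -, hdvd⟩ := hdvd
  rw [Nat.Prime.dvd_factorial Fact.out, Fintype.card_subtype] at hdvd
  obtain ⟨C, hCφ, hC⟩ := exists_subset_card_eq hdvd
  refine ⟨C, hC, fun j hj j' hj' => ?_⟩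
  rw [(mem_filter.1 (hCφ hj)).2, (mem_filter.1 (hCφ hj')).2]

theorem exists_fiber_prod_eq_or_card_eq_of_finset_prod_eq [Nonempty κ] [DecidableEq κ]
    {A : Finset ι} {B : Finset κ} (α : ι → K →+* L) (ρ : κ → K →+* L)
    (h : ∀ a, ∏ i ∈ A, α i a = ∏ j ∈ B, ρ j a) :
    (∃ f : ι → κ, ∀ u ∈ B, ∀ a, ∏ i ∈ A with f i = u, α i a = ρ u a) ∨
      ∃ C ⊆ B, #C = p ∧ ∀ j ∈ C, ∀ j' ∈ C, ρ j = ρ j' := by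
  classical
  rcases exists_fiber_prod_eq_or_card_eq_of_prod_eq (p := p) (fun i : A => α i) (fun j : B => ρ j)
    fun a => by rw [prod_coe_sort A (fun i => α i a), prod_coe_sort B (fun j => ρ j a), h]
    with ⟨f, hf⟩ | ⟨C, hC, hCρ⟩
  · refine .inl ⟨fun i => if hi : i ∈ A then f ⟨i, hi⟩ else Classical.arbitrary κ,
      fun u hu a => ?_⟩
    rw [← hf ⟨u, hu⟩ a, prod_filter, prod_filter, prod_subtype A (fun _ => Iff.rfl)]
    refine prod_congr rfl fun i _ => ?_
    simp [i.2, Subtype.ext_iff]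
  · refine .inr ⟨C.map (.subtype _), fun j hj => ?_, by simpa using hC, by simpa using hCρ⟩
    obtain ⟨j', -, rfl⟩ := mem_map.1 hj
    exact j'.2

end FiberProducts

/-- A factor `σ ^ p ^ c` weighs `1 + c (p - 1)`, so that replacing `p` equal factors by a single
factor twisted once more never increases the weight. -/
def twistWeight {ι : Type*} (p : ℕ) (A : Finset ι) (c : ι → ℕ) : ℤ :=
  ∑ i ∈ A, (1 + (c i : ℤ) * (p - 1))

section TwistWeight

variable {ι : Type*} {p : ℕ}

theorem twistWeight_le_of_subset (hp : 1 ≤ p) {A A' : Finset ι} (h : A' ⊆ A) (c : ι → ℕ) :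
    twistWeight p A' c ≤ twistWeight p A c :=
  sum_le_sum_of_subset_of_nonneg h fun i _ _ => by
    have : (0 : ℤ) ≤ (c i : ℤ) * (p - 1) := mul_nonneg (by positivity) (by omega)
    linarith

theorem le_twistWeight (hp : 1 ≤ p) {A : Finset ι} {i : ι} (hi : i ∈ A) (c : ι → ℕ) :
    1 + (c i : ℤ) * (p - 1) ≤ twistWeight p A c := by
  simpa [twistWeight] using twistWeight_le_of_subset hp (singleton_subset_iff.2 hi) c

theorem exists_shorter_prod_pow_eq {α M : Type*} [CommMonoid M] (hp : 2 ≤ p) {B C : Finset ι}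
    (hCB : C ⊆ B) (hC : #C = p) {x : ι → α → M} {d : ι → ℕ}
    (hCx : ∀ j ∈ C, ∀ j' ∈ C, ∀ a, x j a ^ p ^ d j = x j' a ^ p ^ d j') {j₀ : ι} (hj₀ : j₀ ∈ B) :
    ∃ B' ⊆ B, #B' < #B ∧ j₀ ∈ B' ∧ ∃ d' : ι → ℕ, twistWeight p B' d' ≤ twistWeight p B d ∧
      ∀ a, ∏ j ∈ B', x j a ^ p ^ d' j = ∏ j ∈ B, x j a ^ p ^ d j := by
  classical
  obtain ⟨r, hr, hrj₀⟩ : ∃ r ∈ C, j₀ ∈ C → r = j₀ := by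
    by_cases hj₀C : j₀ ∈ C
    · exact ⟨j₀, hj₀C, fun _ => rfl⟩
    · obtain ⟨r, hr⟩ := card_pos.1 (by omega : 0 < #C)
      exact ⟨r, hr, fun h => absurd h hj₀C⟩
  have hE : #(C.erase r) = p - 1 := by rw [card_erase_of_mem hr, hC]
  have hEB : C.erase r ⊆ B := (erase_subset r C).trans hCB
  have hrB' : r ∈ B \ C.erase r := mem_sdiff.2 ⟨hCB hr, notMem_erase r C⟩
  set d' := Function.update d r (d r + 1)
  have hd' : ∀ j ∈ (B \ C.erase r).erase r, d' j = d j := fun j hj =>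
    Function.update_of_ne (ne_of_mem_erase hj) _ _
  refine ⟨B \ C.erase r, sdiff_subset, card_lt_card (sdiff_ssubset hEB
    (card_pos.1 (by omega))), mem_sdiff.2 ⟨hj₀, fun h => ?_⟩, d', ?_, fun a => ?_⟩
  · exact ne_of_mem_erase h (hrj₀ (mem_of_mem_erase h)).symm
  · rw [twistWeight, twistWeight, ← sum_sdiff hEB, ← add_sum_erase _ _ hrB',
      ← add_sum_erase _ _ hrB', sum_congr rfl fun j hj => by rw [hd' j hj]]
    have : (#(C.erase r) : ℤ) ≤ ∑ j ∈ C.erase r, (1 + (d j : ℤ) * (p - 1)) := by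
      simpa using card_nsmul_le_sum (C.erase r) (fun j => 1 + (d j : ℤ) * (p - 1)) 1 fun j _ =>
        le_add_of_nonneg_right (mul_nonneg (Nat.cast_nonneg (d j)) (by omega))
    simp only [d', Function.update_self]
    push_cast
    have : ((p - 1 : ℕ) : ℤ) = p - 1 := by omega
    linarith
  · rw [← prod_sdiff hEB, ← mul_prod_erase _ _ hrB', ← mul_prod_erase _ _ hrB',
      prod_congr rfl fun j hj => by rw [hd' j hj],
      prod_congr rfl fun j hj => hCx j (mem_of_mem_erase hj) r hr a, prod_const, hE]
    simp only [d', Function.update_self]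
    rw [mul_right_comm, ← pow_succ', Nat.sub_add_cancel (by omega), ← pow_mul, ← pow_succ]

end TwistWeight

section FrobeniusTwists

variable {K L ι κ : Type*} [Field K] [Field L] {p : ℕ} [Fact p.Prime] [CharP L p]

theorem exists_pow_eq_pow_of_pow_eq_prod {φ : K →+* L} {e : ℕ} {A : Finset ι}
    {σ : ι → K →+* L} {c : ι → ℕ} (h : ∀ a, φ a ^ p ^ e = ∏ i ∈ A, σ i a ^ p ^ c i) :
    ∃ i ∈ A, ∃ s t : ℕ, (∀ a, φ a ^ p ^ s = σ i a ^ p ^ t) ∧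
      ((t : ℤ) - s) * (p - 1) < twistWeight p A c ∧ ((s : ℤ) - t) * (p - 1) < 1 + e * (p - 1) := by
  classical
  have hp : 2 ≤ p := (Fact.out : p.Prime).two_le
  induction hA : #A using Nat.strong_induction_on generalizing A c with
  | _ N ih =>
  obtain ⟨i₀, hi₀⟩ : A.Nonempty := nonempty_iff_ne_empty.2 fun hA => by
    simpa [hA, (Fact.out : p.Prime).ne_zero] using h 0
  have : Nonempty ι := ⟨i₀⟩
  rcases exists_fiber_prod_eq_or_card_eq_of_finset_prod_eq (p := p) (A := (univ : Finset Unit))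
    (fun _ => (iterateFrobenius L p e).comp φ) (fun i => (iterateFrobenius L p (c i)).comp (σ i))
    (by simpa [iterateFrobenius_def] using h) with ⟨f, hf⟩ | ⟨C, hCA, hC, hCσ⟩
  · have hfA (u : ι) (hu : u ∈ A) : u = f () := by
      by_contra hne
      simpa [Ne.symm hne, (Fact.out : p.Prime).ne_zero] using hf u hu 0
    obtain rfl : A = {f ()} := eq_singleton_iff_unique_mem.2 ⟨hfA i₀ hi₀ ▸ hi₀, hfA⟩
    have hp₁ : (0 : ℤ) ≤ p - 1 := by omega
    refine ⟨f (), mem_singleton_self _, e, c (f ()), by simpa using h, ?_, ?_⟩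
    · simp only [twistWeight, sum_singleton]
      nlinarith [mul_nonneg (Nat.cast_nonneg e) hp₁]
    · nlinarith [mul_nonneg (Nat.cast_nonneg (c (f ()))) hp₁]
  · obtain ⟨A', hA'A, hcard, -, c', hw, hprod⟩ := exists_shorter_prod_pow_eq hp hCA hC
      (fun j hj j' hj' a => by simpa [iterateFrobenius_def] using congr($(hCσ j hj j' hj') a)) hi₀
    obtain ⟨i, hi, s, t, heq, h₁, h₂⟩ := ih _ (hA ▸ hcard) (fun a => (h a).trans (hprod a).symm) rfl
    exact ⟨i, hA'A hi, s, t, heq, h₁.trans_le hw, h₂⟩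

theorem exists_pow_eq_pow_of_prod_eq_prod {A : Finset ι} {B : Finset κ} {σ : ι → K →+* L}
    {τ : κ → K →+* L} {c : ι → ℕ} {d : κ → ℕ}
    (h : ∀ a, ∏ i ∈ A, σ i a ^ p ^ c i = ∏ j ∈ B, τ j a ^ p ^ d j) {j₀ : κ} (hj₀ : j₀ ∈ B) :
    ∃ i ∈ A, ∃ s t : ℕ, (∀ a, τ j₀ a ^ p ^ s = σ i a ^ p ^ t) ∧
      ((t : ℤ) - s) * (p - 1) < twistWeight p A c ∧
        ((s : ℤ) - t) * (p - 1) < twistWeight p B d := by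
  classical
  have hp : 2 ≤ p := (Fact.out : p.Prime).two_le
  induction hB : #B using Nat.strong_induction_on generalizing B d j₀ with
  | _ N ih =>
  have : Nonempty κ := ⟨j₀⟩
  rcases exists_fiber_prod_eq_or_card_eq_of_finset_prod_eq (p := p)
    (fun i => (iterateFrobenius L p (c i)).comp (σ i))
    (fun j => (iterateFrobenius L p (d j)).comp (τ j))
    (by simpa [iterateFrobenius_def] using h) with ⟨f, hf⟩ | ⟨C, hCB, hC, hCτ⟩
  · obtain ⟨i, hi, s, t, heq, h₁, h₂⟩ := exists_pow_eq_pow_of_pow_eq_prod (A := {i ∈ A | f i = j₀})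
      fun a => by simpa [iterateFrobenius_def] using (hf j₀ hj₀ a).symm
    exact ⟨i, (mem_filter.1 hi).1, s, t, heq,
      h₁.trans_le (twistWeight_le_of_subset (by omega) (filter_subset _ _) c),
      h₂.trans_le (le_twistWeight (by omega) hj₀ d)⟩
  · obtain ⟨B', -, hcard, hj₀', d', hw, hprod⟩ := exists_shorter_prod_pow_eq hp hCB hC
      (fun j hj j' hj' a => by simpa [iterateFrobenius_def] using congr($(hCτ j hj j' hj') a)) hj₀
    obtain ⟨i, hi, s, t, heq, h₁, h₂⟩ :=
      ih _ (hB ▸ hcard) (fun a => (h a).trans (hprod a).symm) hj₀' rfl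
    exact ⟨i, hi, s, t, heq, h₁, h₂.trans_le hw⟩

theorem pow_pow_sub_eq_of_pow_pow_eq {R : Type*} [CommRing R] [IsReduced R] {p : ℕ} [ExpChar R p]
    {x y : R} {s t : ℕ} (h : x ^ p ^ s = y ^ p ^ t) : x ^ p ^ (s - t) = y ^ p ^ (t - s) := by
  apply iterateFrobenius_inj R p (min s t)
  simp only [iterateFrobenius_def, ← pow_mul, ← pow_add]
  rwa [show s - t + min s t = s by omega, show t - s + min s t = t by omega]

theorem exists_frobenius_shift_of_prod_eq [Fintype ι] [Fintype κ] {σ : ι → K →+* L}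
    {τ : κ → K →+* L} (h : ∀ a, ∏ i, σ i a = ∏ j, τ j a) (j : κ) :
    ∃ l : ℤ, -((Fintype.card κ : ℤ) - 1) ≤ l * (p - 1) ∧ l * (p - 1) ≤ (Fintype.card ι : ℤ) - 1 ∧
      ∃ i, ∀ a, τ j a ^ p ^ (-l).toNat = σ i a ^ p ^ l.toNat := by
  obtain ⟨i, -, s, t, heq, h₁, h₂⟩ := exists_pow_eq_pow_of_prod_eq_prod (c := 0) (d := 0)
    (by simpa using h) (mem_univ j)
  simp only [twistWeight, Pi.zero_apply, Nat.cast_zero, zero_mul, add_zero, sum_const,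
    card_univ, nsmul_eq_mul, mul_one] at h₁ h₂
  refine ⟨t - s, by linarith, by linarith, i, fun a => ?_⟩
  rw [show (-((t : ℤ) - s)).toNat = s - t by omega, show ((t : ℤ) - s).toNat = t - s by omega]
  exact pow_pow_sub_eq_of_pow_pow_eq (heq a)

end FrobeniusTwists

theorem stmt_14_general {K L : Type*} [Field K] [Field L] (p : ℕ) [Fact p.Prime]
    [CharP L p] (n m : ℕ)
    (σ : Fin n → (K →+* L)) (τ : Fin m → (K →+* L))
    (heq : ∀ a : K, ∏ i : Fin n, σ i a = ∏ j : Fin m, τ j a) :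
    (∀ j : Fin m, ∃ l : ℤ, -((m : ℤ) - 1) ≤ l * ((p : ℤ) - 1) ∧ l * ((p : ℤ) - 1) ≤ (n : ℤ) - 1 ∧
      ∃ i : Fin n, ∀ a : K, τ j a ^ (p : ℕ) ^ ((-l).toNat) = σ i a ^ (p : ℕ) ^ l.toNat) ∧
    (∀ i : Fin n, ∃ l : ℤ, -((n : ℤ) - 1) ≤ l * ((p : ℤ) - 1) ∧ l * ((p : ℤ) - 1) ≤ (m : ℤ) - 1 ∧
      ∃ j : Fin m, ∀ a : K, σ i a ^ (p : ℕ) ^ ((-l).toNat) = τ j a ^ (p : ℕ) ^ l.toNat) :=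
  ⟨fun j => by simpa using exists_frobenius_shift_of_prod_eq heq j,
    fun i => by simpa using exists_frobenius_shift_of_prod_eq (fun a => (heq a).symm) i⟩

theorem stmt_14 {K L : Type*} [Field K] [Field L] (p : ℕ) [Fact p.Prime]
    [CharP K p] [CharP L p] (n m : ℕ) (hnm : m ≤ n) (hm : 1 ≤ m)
    (σ : Fin n → (K →+* L)) (τ : Fin m → (K →+* L))
    (heq : ∀ a : K, ∏ i : Fin n, σ i a = ∏ j : Fin m, τ j a)
    (hrep : ∃ s : Finset (Fin n), s.card = p ∧ ∀ i ∈ s, ∀ j ∈ s, σ i = σ j) :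
    (∀ j : Fin m, ∃ l : ℤ, -((m : ℤ) - 1) ≤ l * ((p : ℤ) - 1) ∧ l * ((p : ℤ) - 1) ≤ (n : ℤ) - 1 ∧
      ∃ i : Fin n, ∀ a : K, τ j a ^ (p : ℕ) ^ ((-l).toNat) = σ i a ^ (p : ℕ) ^ l.toNat) ∧
    (∀ i : Fin n, ∃ l : ℤ, -((n : ℤ) - 1) ≤ l * ((p : ℤ) - 1) ∧ l * ((p : ℤ) - 1) ≤ (m : ℤ) - 1 ∧
      ∃ j : Fin m, ∀ a : K, σ i a ^ (p : ℕ) ^ ((-l).toNat) = τ j a ^ (p : ℕ) ^ l.toNat) :=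
  stmt_14_general p n m σ τ heq
end

section
/- Let K, L be fields and σ₁, σ₂, τ₁, τ₂ : K → L field homomorphisms with σ₁(a)σ₂(a) = τ₁(a)τ₂(a) for all a ∈ K. Then {σ₁, σ₂} = {τ₁, τ₂} as multisets, or char K = char L = 2 with σ₁ = σ₂ = τ₁ = τ₂. -/
/-- If a ring hom agrees pointwise with one of two ring homs, it equals one of them. -/
lemma ringHom_eq_or_eq {K L : Type*} [Field K] [Field L] (f g h : K →+* L)
    (H : ∀ a : K, f a = g a ∨ f a = h a) : f = g ∨ f = h := by
  by_contra hc
  push_neg at hc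
  obtain ⟨hfg, hfh⟩ := hc
  obtain ⟨a, ha⟩ : ∃ a, f a ≠ g a := by
    by_contra h'; push_neg at h'; exact hfg (RingHom.ext h')
  obtain ⟨b, hb⟩ : ∃ b, f b ≠ h b := by
    by_contra h'; push_neg at h'; exact hfh (RingHom.ext h')
  have hah : f a = h a := (H a).resolve_left ha
  have hbg : f b = g b := (H b).resolve_right hb
  rcases H (a + b) with hg | hh
  · simp only [map_add] at hg
    rw [hbg] at hg
    exact ha (add_right_cancel hg)
  · simp only [map_add] at hh
    rw [hah] at hh
    exact hb (add_left_cancel hh)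

theorem stmt_16 {K L : Type*} [Field K] [Field L]
    (σ₁ σ₂ τ₁ τ₂ : K →+* L)
    (heq : ∀ a : K, σ₁ a * σ₂ a = τ₁ a * τ₂ a) :
    ({σ₁, σ₂} : Multiset (K →+* L)) = {τ₁, τ₂} ∨
      (ringChar K = 2 ∧ ringChar L = 2 ∧ σ₁ = σ₂ ∧ σ₂ = τ₁ ∧ τ₁ = τ₂) := by
  left
  have hsum : ∀ a : K, σ₁ a + σ₂ a = τ₁ a + τ₂ a := by
    intro a
    have h1 := heq (a + 1)
    simp only [map_add, map_one] at h1
    have h2 := heq a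
    linear_combination h1 - h2
  have hzero : ∀ a : K, (τ₁ a - σ₁ a) * (τ₁ a - σ₂ a) = 0 := by
    intro a
    linear_combination heq a - τ₁ a * hsum a
  have hcases : ∀ a : K, τ₁ a = σ₁ a ∨ τ₁ a = σ₂ a := by
    intro a
    rcases mul_eq_zero.mp (hzero a) with h | h
    · left; exact sub_eq_zero.mp h
    · right; exact sub_eq_zero.mp h
  -- cancellation lemma
  have cancel : ∀ (f : K →+* L), (∀ a, f a * σ₂ a = f a * τ₂ a) → σ₂ = τ₂ := by
    intro f hf
    ext a
    by_cases ha : a = 0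
    · simp [ha]
    · exact mul_left_cancel₀ ((map_ne_zero f).mpr ha) (hf a)
  rcases ringHom_eq_or_eq τ₁ σ₁ σ₂ hcases with h | h
  · have h2 : σ₂ = τ₂ := by
      apply cancel σ₁
      intro a
      rw [heq a, ← h]
    rw [h, h2]
  · -- τ₁ = σ₂, then τ₂ = σ₁
    have h2 : σ₁ = τ₂ := by
      have : ∀ a, σ₂ a * σ₁ a = σ₂ a * τ₂ a := by
        intro a
        rw [mul_comm, heq a, ← h]
      ext a
      by_cases ha : a = 0
      · simp [ha]
      · exact mul_left_cancel₀ ((map_ne_zero σ₂).mpr ha) (this a)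
    rw [h2, ← h]
    exact Multiset.cons_swap _ _ _
end

section
/- Let M be a commutative composition algebra over a field L with norm N, and let K be a field with an embedding φ : K → M. Then the map q : K → L, q(x) = N(φ(x)), has one of the following forms: q(x) = ψ(x)² for a field embedding ψ : K → L; or q(x) = ψ₁(x)ψ₂(x) for field embeddings ψ₁, ψ₂ : K → L; or q(x) = ψ(x)·σ(ψ(x)) for an embedding ψ : K → M into a separable quadratic field extension M of L with nontrivial Galois automorphism σ. -/
/-!
Write `B` for the polar form of `N` and `T x = B 1 x`. Nondegeneracy and multiplicativity give
`x² = T x • x - N x • 1`, so `σ x = T x • 1 - x` is an `L`-algebra involution with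
`x * σ x = N x`; hence every `L`-algebra map `p : M → L` yields `N = p * (p ∘ σ)`.
Such a `p` exists when `σ = id`, since `σ`-fixed elements are scalars, and when `N` has a
nonzero zero `z`: then `u = z / T z` satisfies `x * u = (T x - B x u) • u`. Otherwise `N` is
anisotropic, so `M` is a field, and for `e` with `d = e - σ e ≠ 0` the `σ`-fixed elements
`(x - σ x) * d` and `d²` are scalars, which writes every `x` in the basis `1, e`.
-/

open Polynomial
open QuadraticMap (polar polarBilin polar_add_left polar_add_right polar_comm polar_self
  polar_smul_left polar_sub_left)

theorem Polynomial.separable_X_sq_sub_C_mul_X_add_C {K : Type*} [Field K] {t n : K}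
    (h : t ^ 2 - 4 * n ≠ 0) : (X ^ 2 - C t * X + C n).Separable := by
  refine ⟨C (-4 * (t ^ 2 - 4 * n)⁻¹), C (t ^ 2 - 4 * n)⁻¹ * (C 2 * X - C t), ?_⟩
  have hinv : C (t ^ 2 - 4 * n)⁻¹ * C (t ^ 2 - 4 * n) = 1 := by
    rw [← C_mul, inv_mul_cancel₀ h, C_1]
  simp only [derivative_add, derivative_X_pow, derivative_C_mul_X,
    derivative_C, map_mul, map_sub, map_pow, map_neg, map_ofNat, map_natCast] at hinv ⊢
  linear_combination hinv

namespace QuadraticForm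

variable {L M : Type*} [Field L] [CommRing M] [Algebra L M] {Q : QuadraticForm L M}

structure IsCompositionNorm (Q : QuadraticForm L M) : Prop where
  map_one' : Q 1 = 1
  map_mul' : ∀ x y, Q (x * y) = Q x * Q y
  nondegenerate : ∀ x, (∀ y, polar Q x y = 0) → x = 0

def trace (Q : QuadraticForm L M) : M →ₗ[L] L := polarBilin Q 1

theorem trace_apply (x : M) : trace Q x = polar Q 1 x := rfl

theorem polar_mul_mul_right (hmul : ∀ x y, Q (x * y) = Q x * Q y) (x y z : M) :
    polar Q (x * z) (y * z) = polar Q x y * Q z := by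
  simp only [polar, ← add_mul, hmul]
  ring

theorem polar_mul_add_polar_mul (hmul : ∀ x y, Q (x * y) = Q x * Q y) (x y z w : M) :
    polar Q (x * z) (y * w) + polar Q (x * w) (y * z) = polar Q x y * polar Q z w := by
  have h := polar_mul_mul_right hmul x y (z + w)
  rw [mul_add, mul_add, polar_add_left, polar_add_right, polar_add_right,
    QuadraticMap.map_add Q z w, polar_mul_mul_right hmul, polar_mul_mul_right hmul] at h
  linear_combination h

theorem trace_mul (hmul : ∀ x y, Q (x * y) = Q x * Q y) (x y : M) :
    trace Q (x * y) = trace Q x * trace Q y - polar Q x y := by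
  have h := polar_mul_add_polar_mul hmul 1 x 1 y
  simp only [one_mul, mul_one] at h
  rw [polar_comm Q y x] at h
  exact eq_sub_of_add_eq h

theorem polar_mul_self_left (hmul : ∀ x y, Q (x * y) = Q x * Q y) (x z : M) :
    polar Q (x * x) z = trace Q x * polar Q x z - Q x * trace Q z := by
  have h := polar_mul_add_polar_mul hmul x 1 x z
  have h' := polar_mul_mul_right hmul z 1 x
  simp only [one_mul] at h h'
  rw [polar_comm Q x 1] at h
  rw [mul_comm z x, polar_comm Q z 1] at h'
  rw [trace_apply, trace_apply]
  linear_combination h - h'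

namespace IsCompositionNorm

theorem mul_self_eq_trace_smul_sub (hQ : IsCompositionNorm Q) (x : M) :
    x * x = trace Q x • x - Q x • 1 := by
  refine sub_eq_zero.mp (hQ.nondegenerate _ fun z => ?_)
  rw [polar_sub_left, polar_sub_left, polar_smul_left, polar_smul_left,
    polar_mul_self_left hQ.map_mul', ← trace_apply, smul_eq_mul, smul_eq_mul]
  ring

theorem two_smul_mul (hQ : IsCompositionNorm Q) (x y : M) :
    (2 : L) • (x * y) = trace Q x • y + trace Q y • x - polar Q x y • 1 := by
  have hxy := hQ.mul_self_eq_trace_smul_sub (x + y)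
  rw [map_add, QuadraticMap.map_add Q x y, add_mul, mul_add, mul_add, mul_comm y x] at hxy
  linear_combination (norm := module)
    hxy - hQ.mul_self_eq_trace_smul_sub x - hQ.mul_self_eq_trace_smul_sub y

theorem nontrivial (hQ : IsCompositionNorm Q) : Nontrivial M :=
  ⟨⟨1, 0, fun h => one_ne_zero (by rw [← hQ.map_one', h, QuadraticMap.map_zero])⟩⟩

theorem trace_one (hQ : IsCompositionNorm Q) : trace Q 1 = 2 := by
  rw [trace_apply, polar_self, hQ.map_one', two_nsmul, one_add_one_eq_two]

theorem exists_trace_ne_zero (hQ : IsCompositionNorm Q) : ∃ y, trace Q y ≠ 0 := by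
  have := hQ.nontrivial
  by_contra! h
  exact one_ne_zero (hQ.nondegenerate 1 h)

theorem trace_eq_zero_of_mul_self_eq_zero (hQ : IsCompositionNorm Q) {u : M} (hu : u * u = 0) :
    trace Q u = 0 := by
  have hQu : Q u = 0 := mul_self_eq_zero.mp (by rw [← hQ.map_mul', hu, QuadraticMap.map_zero])
  have h := hQ.mul_self_eq_trace_smul_sub u
  rw [hu, hQu, zero_smul, sub_zero] at h
  rcases smul_eq_zero.mp h.symm with h | rfl
  · exact h
  · exact map_zero _

theorem eq_zero_of_mul_self_eq_zero (hQ : IsCompositionNorm Q) {z : M} (hz : z * z = 0) :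
    z = 0 := by
  refine hQ.nondegenerate z fun y => ?_
  have hzy : z * y * (z * y) = 0 := by rw [mul_mul_mul_comm, hz, zero_mul]
  have h := trace_mul hQ.map_mul' z y
  rw [hQ.trace_eq_zero_of_mul_self_eq_zero hzy, hQ.trace_eq_zero_of_mul_self_eq_zero hz] at h
  linear_combination h

def conj (hQ : IsCompositionNorm Q) : M ≃ₐ[L] M where
  toFun x := trace Q x • 1 - x
  invFun x := trace Q x • 1 - x
  left_inv x := by
    simp only [map_sub, map_smul, hQ.trace_one, smul_eq_mul]
    module
  right_inv x := by
    simp only [map_sub, map_smul, hQ.trace_one, smul_eq_mul]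
    module
  map_mul' x y := by
    simp only [trace_mul hQ.map_mul', sub_mul, mul_sub, smul_mul_assoc, mul_smul_comm, one_mul,
      mul_one]
    linear_combination (norm := module) -hQ.two_smul_mul x y
  map_add' x y := by
    simp only [map_add]
    module
  commutes' c := by
    simp only [Algebra.algebraMap_eq_smul_one, map_smul, hQ.trace_one, smul_eq_mul]
    module

theorem conj_apply (hQ : IsCompositionNorm Q) (x : M) : hQ.conj x = trace Q x • 1 - x := rfl

theorem mul_conj (hQ : IsCompositionNorm Q) (x : M) : x * hQ.conj x = algebraMap L M (Q x) := by
  rw [conj_apply, mul_sub, mul_smul_comm, mul_one, hQ.mul_self_eq_trace_smul_sub,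
    Algebra.algebraMap_eq_smul_one]
  abel

theorem exists_smul_one_eq_of_conj_eq (hQ : IsCompositionNorm Q) {x : M} (hx : hQ.conj x = x) :
    ∃ a : L, a • (1 : M) = x := by
  obtain ⟨y, hy⟩ := hQ.exists_trace_ne_zero
  have h2x : (2 : L) • x = trace Q x • 1 := by
    rw [conj_apply] at hx
    linear_combination (norm := module) -hx
  have h := hQ.two_smul_mul x y
  rw [← smul_mul_assoc, h2x, smul_mul_assoc, one_mul] at h
  refine ⟨(trace Q y)⁻¹ * polar Q x y, ?_⟩
  rw [mul_smul, inv_smul_eq_iff₀ hy]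
  linear_combination (norm := module) h

theorem isField_of_anisotropic (hQ : IsCompositionNorm Q) (h : Q.Anisotropic) : IsField M where
  exists_pair_ne := hQ.nontrivial.exists_pair_ne
  mul_comm := mul_comm
  mul_inv_cancel {x} hx := ⟨(Q x)⁻¹ • hQ.conj x, by
    rw [mul_smul_comm, mul_conj, Algebra.algebraMap_eq_smul_one, smul_smul,
      inv_mul_cancel₀ (mt (h x) hx), one_smul]⟩

theorem mul_eq_smul_of_trace_eq_one (hQ : IsCompositionNorm Q) {u : M} (hQu : Q u = 0)
    (hTu : trace Q u = 1) (x : M) : x * u = (trace Q x - polar Q x u) • u := by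
  have huu : u * u = u := by
    rw [hQ.mul_self_eq_trace_smul_sub, hQu, hTu, one_smul, zero_smul, sub_zero]
  have h := congrArg (· * u) (hQ.two_smul_mul x u)
  simp only [sub_mul, add_mul, smul_mul_assoc, mul_assoc, huu, one_mul, hTu, one_smul] at h
  linear_combination (norm := module) h

theorem nonempty_algHom_of_not_anisotropic (hQ : IsCompositionNorm Q) (h : ¬Q.Anisotropic) :
    Nonempty (M →ₐ[L] L) := by
  obtain ⟨z, hz0, hQz⟩ := (QuadraticMap.not_anisotropic_iff_exists Q).mp h
  have hTz : trace Q z ≠ 0 := fun hTz => hz0 <| hQ.eq_zero_of_mul_self_eq_zero <| by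
    rw [hQ.mul_self_eq_trace_smul_sub, hTz, hQz, zero_smul, zero_smul, sub_zero]
  set u := (trace Q z)⁻¹ • z
  have hu0 : u ≠ 0 := smul_ne_zero (inv_ne_zero hTz) hz0
  have hQu : Q u = 0 := by rw [QuadraticMap.map_smul, hQz, smul_zero]
  have hTu : trace Q u = 1 := by rw [map_smul, smul_eq_mul, inv_mul_cancel₀ hTz]
  let p : M →ₗ[L] L := trace Q - (polarBilin Q).flip u
  have hp (x : M) : x * u = p x • u := hQ.mul_eq_smul_of_trace_eq_one hQu hTu x
  refine ⟨AlgHom.ofLinearMap p (smul_left_injective L hu0 ?_)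
    fun x y => smul_left_injective L hu0 ?_⟩
  · dsimp only
    rw [← hp, one_mul, one_smul]
  · dsimp only
    rw [← hp, mul_assoc, hp y, mul_smul_comm, hp x, smul_smul, mul_comm]

theorem apply_eq_algHom_mul_algHom_conj (hQ : IsCompositionNorm Q) (p : M →ₐ[L] L) (x : M) :
    Q x = p x * p (hQ.conj x) := by
  rw [← map_mul, mul_conj, AlgHom.commutes, Algebra.algebraMap_self_apply]

theorem nonempty_algHom_of_conj_eq_refl (hQ : IsCompositionNorm Q)
    (h : hQ.conj = AlgEquiv.refl) : Nonempty (M →ₐ[L] L) :=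
  have := hQ.nontrivial
  have hsurj : Function.Surjective (algebraMap L M) := fun x => by
    simpa only [Algebra.algebraMap_eq_smul_one] using
      hQ.exists_smul_one_eq_of_conj_eq (by rw [h]; rfl)
  ⟨(AlgEquiv.ofBijective (Algebra.ofId L M) ⟨(algebraMap L M).injective, hsurj⟩).symm⟩

theorem exists_smul_one_add_smul_eq (hQ : IsCompositionNorm Q) {e : M} (he : hQ.conj e ≠ e)
    (x : M) : ∃ a b : L, a • (1 : M) + b • e = x := by
  set σ := hQ.conj
  have hσσ (y : M) : σ (σ y) = y := σ.symm_apply_apply y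
  obtain ⟨c, hc⟩ := hQ.exists_smul_one_eq_of_conj_eq (x := (x - σ x) * (e - σ e)) <| by
    rw [map_mul, map_sub, map_sub, hσσ, hσσ]; ring
  obtain ⟨δ, hδ⟩ := hQ.exists_smul_one_eq_of_conj_eq (x := (e - σ e) * (e - σ e)) <| by
    rw [map_mul, map_sub, hσσ]; ring
  have hδ0 : δ ≠ 0 := by
    rintro rfl
    exact he (sub_eq_zero.mp (hQ.eq_zero_of_mul_self_eq_zero (by rw [← hδ, zero_smul]))).symm
  have key : δ • (x - σ x) = c • (e - σ e) := by
    calc δ • (x - σ x) = (δ • (1 : M)) * (x - σ x) := by rw [smul_mul_assoc, one_mul]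
      _ = (e - σ e) * ((x - σ x) * (e - σ e)) := by rw [hδ]; ring
      _ = c • (e - σ e) := by rw [← hc, mul_smul_comm, mul_one]
  obtain ⟨a, ha⟩ := hQ.exists_smul_one_eq_of_conj_eq (x := δ • x - c • e) <| by
    rw [map_sub, map_smul, map_smul]
    linear_combination (norm := module) -key
  refine ⟨δ⁻¹ * a, δ⁻¹ * c, ?_⟩
  rw [mul_smul, mul_smul, ← smul_add, ha, sub_add_cancel, inv_smul_smul₀ hδ0]

theorem finrank_eq_two_of_conj_ne (hQ : IsCompositionNorm Q) {e : M} (he : hQ.conj e ≠ e) :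
    Module.finrank L M = 2 := by
  have := hQ.nontrivial
  have hli : LinearIndependent L ![(1 : M), e] := by
    refine LinearIndependent.pair_iff.mpr fun s t hst => ?_
    have hconj := congrArg hQ.conj hst
    rw [map_add, map_smul, map_smul, map_one, map_zero] at hconj
    have ht : t • (e - hQ.conj e) = 0 := by linear_combination (norm := module) hst - hconj
    have ht0 : t = 0 := (smul_eq_zero.mp ht).resolve_right (sub_ne_zero.mpr he.symm)
    rw [ht0, zero_smul, add_zero] at hst
    exact ⟨(smul_eq_zero.mp hst).resolve_right one_ne_zero, ht0⟩
  have hspan : ⊤ ≤ Submodule.span L (Set.range ![(1 : M), e]) := fun x _ => by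
    obtain ⟨a, b, rfl⟩ := hQ.exists_smul_one_add_smul_eq he x
    exact Submodule.add_mem _ (Submodule.smul_mem _ _ (Submodule.subset_span ⟨0, rfl⟩))
      (Submodule.smul_mem _ _ (Submodule.subset_span ⟨1, rfl⟩))
  rw [Module.finrank_eq_card_basis (Module.Basis.mk hli hspan), Fintype.card_fin]

theorem sub_conj_mul_self (hQ : IsCompositionNorm Q) (x : M) :
    (x - hQ.conj x) * (x - hQ.conj x) = (trace Q x ^ 2 - 4 * Q x) • 1 := by
  have h : x - hQ.conj x = (2 : L) • x - trace Q x • 1 := by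
    rw [conj_apply]
    module
  rw [h]
  simp only [sub_mul, mul_sub, smul_mul_assoc, mul_smul_comm, one_mul, mul_one]
  rw [hQ.mul_self_eq_trace_smul_sub]
  module

theorem isSeparable (hQ : IsCompositionNorm Q) : Algebra.IsSeparable L M := by
  refine ⟨fun x => ?_⟩
  by_cases hx : hQ.conj x = x
  · obtain ⟨a, rfl⟩ := hQ.exists_smul_one_eq_of_conj_eq hx
    rw [← Algebra.algebraMap_eq_smul_one]
    exact isSeparable_algebraMap a
  have hdisc : trace Q x ^ 2 - 4 * Q x ≠ 0 := fun h0 => hx <| (sub_eq_zero.mp <|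
    hQ.eq_zero_of_mul_self_eq_zero <| by rw [hQ.sub_conj_mul_self, h0, zero_smul]).symm
  refine (separable_X_sq_sub_C_mul_X_add_C hdisc).of_dvd (minpoly.dvd L x ?_)
  simp only [map_add, map_sub, map_mul, aeval_X, aeval_C, Algebra.algebraMap_eq_smul_one,
    smul_mul_assoc, one_mul, pow_two, hQ.mul_self_eq_trace_smul_sub]
  module

theorem classification (hQ : IsCompositionNorm Q) :
    (∃ p : M →ₐ[L] L, ∀ x, Q x = p x ^ 2) ∨
    (∃ p₁ p₂ : M →ₐ[L] L, ∀ x, Q x = p₁ x * p₂ x) ∨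
    (IsField M ∧ Module.finrank L M = 2 ∧ Algebra.IsSeparable L M ∧
      ∃ σ : M ≃ₐ[L] M, σ ≠ AlgEquiv.refl ∧ ∀ x, algebraMap L M (Q x) = x * σ x) := by
  by_cases hiso : Q.Anisotropic
  · by_cases hσ : hQ.conj = AlgEquiv.refl
    · obtain ⟨p⟩ := hQ.nonempty_algHom_of_conj_eq_refl hσ
      exact Or.inl ⟨p, fun x => by rw [hQ.apply_eq_algHom_mul_algHom_conj p, hσ, pow_two]; rfl⟩
    · obtain ⟨e, he⟩ := DFunLike.ne_iff.mp hσ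
      exact Or.inr <| Or.inr ⟨hQ.isField_of_anisotropic hiso, hQ.finrank_eq_two_of_conj_ne he,
        hQ.isSeparable, hQ.conj, hσ, fun x => (hQ.mul_conj x).symm⟩
  · obtain ⟨p⟩ := hQ.nonempty_algHom_of_not_anisotropic hiso
    exact Or.inr <| Or.inl ⟨p, p.comp hQ.conj, hQ.apply_eq_algHom_mul_algHom_conj p⟩

end IsCompositionNorm

end QuadraticForm

theorem stmt_19 {L M K : Type*} [Field L] [CommRing M] [Algebra L M] [Field K]
    (N : M → L)
    (N_smul : ∀ (c : L) (x : M), N (c • x) = c ^ 2 * N x)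
    (polar_add_left : ∀ x y z : M, (N (x + y + z) - N (x + y) - N z)
        = (N (x + z) - N x - N z) + (N (y + z) - N y - N z))
    (polar_smul_left : ∀ (c : L) (x y : M),
        (N (c • x + y) - N (c • x) - N y) = c * (N (x + y) - N x - N y))
    (nondegenerate : ∀ x : M, (∀ y : M, N (x + y) - N x - N y = 0) → x = 0)
    (N_one : N 1 = 1)
    (N_mul : ∀ x y : M, N (x * y) = N x * N y)
    (φ : K →+* M) :
    (∃ ψ : K →+* L, ∀ x : K, N (φ x) = ψ x ^ 2) ∨
    (∃ ψ₁ ψ₂ : K →+* L, ∀ x : K, N (φ x) = ψ₁ x * ψ₂ x) ∨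
    (IsField M ∧ Module.finrank L M = 2 ∧ Algebra.IsSeparable L M ∧
      ∃ σ : M ≃ₐ[L] M, σ ≠ AlgEquiv.refl ∧
        ∃ ψ : K →+* M, ∀ x : K, algebraMap L M (N (φ x)) = ψ x * σ (ψ x)) := by
  let Q : QuadraticForm L M :=
    QuadraticMap.ofPolar N (fun c x => by rw [N_smul, pow_two]; rfl) polar_add_left
      polar_smul_left
  have hQ : Q.IsCompositionNorm := ⟨N_one, N_mul, nondegenerate⟩
  rcases hQ.classification with
    ⟨p, hp⟩ | ⟨p₁, p₂, hp⟩ | ⟨hfield, hrank, hsep, σ, hσ, hσQ⟩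
  · exact Or.inl ⟨(p : M →+* L).comp φ, fun x => hp (φ x)⟩
  · exact Or.inr <| Or.inl
      ⟨(p₁ : M →+* L).comp φ, (p₂ : M →+* L).comp φ, fun x => hp (φ x)⟩
  · exact Or.inr <| Or.inr ⟨hfield, hrank, hsep, σ, hσ, φ, fun x => hσQ (φ x)⟩
end
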